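/- arXiv:2002.12322 — 10 statements merged into one kernel-verified Lean document; each statement's English description precedes it below -/
import Mathlib

section
/- The number of permutations of [n] avoiding the distant pattern 2□1 (i.e., having no inversion (π_i, π_j) with j - i ≥ 2) equals the Fibonacci number F_{n+1}, for all n ≥ 1 (with F_1 = F_2 = 1). -/
/-!
A permutation without distant inversions moves every point by at most one: if `π i ≥ i + 2`,
the `i + 2` values `≤ i + 1` would all have to sit at the `i + 1` positions `≤ i + 1` other
than `i`, and the bound `π i ≥ i - 1` follows by applying this to the reverse-complement of `π`.
A permutation of `[n + 2]` moving every
point by at most one either fixes `0` or swaps `0` and `1`, and removing that block leaves a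
permutation of the same kind of `[n + 1]` or `[n]`; hence the counts satisfy the Fibonacci
recursion.
-/

open Equiv Equiv.Perm Function

variable {n : ℕ}

def NoDistantInversion (π : Perm (Fin n)) : Prop :=
  ∀ i j : Fin n, (i : ℕ) + 2 ≤ j → π i ≤ π j

def MovesAtMostOne (π : Perm (Fin n)) : Prop :=
  ∀ i : Fin n, (i : ℕ) ≤ π i + 1 ∧ (π i : ℕ) ≤ i + 1

namespace NoDistantInversion

variable {π : Perm (Fin n)}

lemma apply_le_succ (h : NoDistantInversion π) (i : Fin n) : (π i : ℕ) ≤ i + 1 := by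
  by_contra! hi
  let a : Fin n := ⟨i + 1, by omega⟩
  have hmaps : Set.MapsTo π.symm (Finset.Iic a) ((Finset.Iic a).erase i) := by
    intro v hv
    simp only [Finset.coe_Iic, Set.mem_Iic, Fin.le_def, a] at hv
    simp only [Finset.coe_erase, Finset.coe_Iic, Set.mem_sdiff, Set.mem_Iic,
      Set.mem_singleton_iff, Fin.le_def, a]
    refine ⟨?_, fun hvi => ?_⟩
    · by_contra! hfar
      have := Fin.le_def.mp (h i (π.symm v) (by omega))
      simp only [apply_symm_apply] at this
      omega
    · rw [symm_apply_eq] at hvi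
      omega
  have hcard := Finset.card_le_card_of_injOn π.symm hmaps π.symm.injective.injOn
  rw [Finset.card_erase_of_mem (Finset.mem_Iic.mpr (Fin.le_def.mpr (by simp [a])))]
    at hcard
  simp [a] at hcard

lemma rev_conj (h : NoDistantInversion π) :
    NoDistantInversion (Fin.revPerm.trans (π.trans Fin.revPerm)) := by
  intro i j hij
  simp only [trans_apply, Fin.revPerm_apply, Fin.rev_le_rev]
  exact h _ _ (by simp only [Fin.val_rev]; omega)

lemma le_apply_succ (h : NoDistantInversion π) (i : Fin n) : (i : ℕ) ≤ π i + 1 := by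
  have := h.rev_conj.apply_le_succ i.rev
  simp only [trans_apply, Fin.revPerm_apply, Fin.rev_rev, Fin.val_rev] at this
  omega

end NoDistantInversion

lemma noDistantInversion_iff_movesAtMostOne (π : Perm (Fin n)) :
    NoDistantInversion π ↔ MovesAtMostOne π := by
  refine ⟨fun h i => ⟨h.le_apply_succ i, h.apply_le_succ i⟩, fun h i j hij => ?_⟩
  have := (h i).2
  have := (h j).1
  exact Fin.le_def.mpr (by omega)

lemma movesAtMostOne_of_le_one (hn : n ≤ 1) (π : Perm (Fin n)) : MovesAtMostOne π := by
  intro i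
  have := (π i).2
  omega

def prependFixed (σ : Perm (Fin n)) : Perm (Fin (n + 1)) :=
  decomposeFin.symm (0, σ)

def prependSwap (τ : Perm (Fin n)) : Perm (Fin (n + 2)) :=
  decomposeFin.symm (1, prependFixed τ)

@[simp]
lemma prependFixed_zero (σ : Perm (Fin n)) : prependFixed σ 0 = 0 := by
  simp [prependFixed]

@[simp]
lemma prependFixed_succ (σ : Perm (Fin n)) (x : Fin n) : prependFixed σ x.succ = (σ x).succ := by
  simp [prependFixed]

@[simp]
lemma prependSwap_zero (τ : Perm (Fin n)) : prependSwap τ 0 = 1 := by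
  simp [prependSwap]

@[simp]
lemma prependSwap_one (τ : Perm (Fin n)) : prependSwap τ 1 = 0 := by
  simp [prependSwap]

@[simp]
lemma prependSwap_succ_succ (τ : Perm (Fin n)) (y : Fin n) :
    prependSwap τ y.succ.succ = (τ y).succ.succ := by
  rw [prependSwap, decomposeFin_symm_apply_succ, prependFixed_succ]
  refine swap_apply_of_ne_of_ne (Fin.succ_ne_zero _) ?_
  rw [← Fin.succ_zero_eq_one, Ne, Fin.succ_inj]
  exact Fin.succ_ne_zero _

lemma prependFixed_injective : Injective (prependFixed (n := n)) :=
  fun _ _ h => congrArg Prod.snd (decomposeFin.symm.injective h)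

lemma prependSwap_injective : Injective (prependSwap (n := n)) :=
  fun _ _ h => prependFixed_injective (congrArg Prod.snd (decomposeFin.symm.injective h))

lemma exists_prependFixed_of_apply_zero {π : Perm (Fin (n + 1))} (h : π 0 = 0) :
    ∃ σ, prependFixed σ = π := by
  obtain ⟨⟨p, σ⟩, rfl⟩ := decomposeFin.symm.surjective π
  rw [decomposeFin_symm_apply_zero] at h
  exact ⟨σ, by rw [h]; rfl⟩

lemma exists_prependSwap_of_apply_zero_of_apply_one {π : Perm (Fin (n + 2))} (h₀ : π 0 = 1)
    (h₁ : π 1 = 0) : ∃ τ, prependSwap τ = π := by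
  obtain ⟨⟨p, σ⟩, rfl⟩ := decomposeFin.symm.surjective π
  rw [decomposeFin_symm_apply_zero] at h₀
  subst h₀
  rw [decomposeFin_symm_apply_one, swap_apply_eq_iff, swap_apply_left, ← Fin.succ_zero_eq_one,
    Fin.succ_inj] at h₁
  obtain ⟨τ, rfl⟩ := exists_prependFixed_of_apply_zero h₁
  exact ⟨τ, rfl⟩

lemma movesAtMostOne_prependFixed_iff (σ : Perm (Fin n)) :
    MovesAtMostOne (prependFixed σ) ↔ MovesAtMostOne σ := by
  refine ⟨fun h x => ?_, fun h i => Fin.cases (by simp) (fun x => ?_) i⟩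
  · simpa using h x.succ
  · simpa using h x

lemma movesAtMostOne_prependSwap_iff (τ : Perm (Fin n)) :
    MovesAtMostOne (prependSwap τ) ↔ MovesAtMostOne τ := by
  refine ⟨fun h y => ?_, fun h i => Fin.cases (by simp) (fun x => Fin.cases ?_ (fun y => ?_) x) i⟩
  · simpa using h y.succ.succ
  · simp
  · simpa using h y

lemma MovesAtMostOne.apply_zero_eq_zero_or {π : Perm (Fin (n + 2))} (h : MovesAtMostOne π) :
    π 0 = 0 ∨ (π 0 = 1 ∧ π 1 = 0) := by
  have hle : (π 0 : ℕ) ≤ 1 := by simpa using (h 0).2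
  have hle_symm : (π.symm 0 : ℕ) ≤ 1 := by simpa using (h (π.symm 0)).1
  rcases (by simp only [Fin.ext_iff, Fin.val_zero, Fin.val_one]; omega :
      π 0 = 0 ∨ π 0 = 1) with hzero | hone
  · exact .inl hzero
  · have hsymm : π.symm 0 = 1 := by
      have hne : π.symm 0 ≠ 0 := by
        rw [Ne, symm_apply_eq, hone]
        exact zero_ne_one
      rw [Ne, Fin.ext_iff, Fin.val_zero] at hne
      exact Fin.ext (by rw [Fin.val_one]; omega)
    exact .inr ⟨hone, by rw [← hsymm, apply_symm_apply]⟩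

def prependBlock :
    {σ : Perm (Fin (n + 1)) // MovesAtMostOne σ} ⊕ {τ : Perm (Fin n) // MovesAtMostOne τ} →
      {π : Perm (Fin (n + 2)) // MovesAtMostOne π} :=
  Sum.elim (fun σ => ⟨prependFixed σ, (movesAtMostOne_prependFixed_iff _).2 σ.2⟩)
    (fun τ => ⟨prependSwap τ, (movesAtMostOne_prependSwap_iff _).2 τ.2⟩)

lemma prependBlock_bijective : Bijective (prependBlock (n := n)) := by
  refine ⟨Injective.sumElim ?_ ?_ fun σ τ h => ?_, fun ⟨π, hπ⟩ => ?_⟩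
  · exact fun σ σ' h => Subtype.ext (prependFixed_injective (congrArg Subtype.val h))
  · exact fun τ τ' h => Subtype.ext (prependSwap_injective (congrArg Subtype.val h))
  · have := congrArg (fun π => π.val 0) h
    simp at this
  · rcases hπ.apply_zero_eq_zero_or with h₀ | ⟨h₀, h₁⟩
    · obtain ⟨σ, rfl⟩ := exists_prependFixed_of_apply_zero h₀
      exact ⟨.inl ⟨σ, (movesAtMostOne_prependFixed_iff σ).1 hπ⟩, rfl⟩
    · obtain ⟨τ, rfl⟩ := exists_prependSwap_of_apply_zero_of_apply_one h₀ h₁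
      exact ⟨.inr ⟨τ, (movesAtMostOne_prependSwap_iff τ).1 hπ⟩, rfl⟩

lemma card_movesAtMostOne : ∀ n : ℕ,
    Nat.card {π : Perm (Fin n) // MovesAtMostOne π} = Nat.fib (n + 1)
  | 0 | 1 => by
    rw [Nat.card_congr (subtypeUnivEquiv (movesAtMostOne_of_le_one (by norm_num))),
      Nat.card_perm, Nat.card_fin]
    rfl
  | n + 2 => by
    rw [← Nat.card_congr (Equiv.ofBijective _ prependBlock_bijective), Nat.card_sum,
      card_movesAtMostOne (n + 1), card_movesAtMostOne n, add_comm, ← Nat.fib_add_two]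

theorem stmt0_general (n : ℕ) :
    Nat.card {π : Equiv.Perm (Fin n) //
      ¬ ∃ i j : Fin n, (i : ℕ) + 2 ≤ (j : ℕ) ∧ π j < π i} = Nat.fib (n + 1) := by
  have hiff (π : Perm (Fin n)) :
      (¬ ∃ i j : Fin n, (i : ℕ) + 2 ≤ (j : ℕ) ∧ π j < π i) ↔ MovesAtMostOne π := by
    rw [← noDistantInversion_iff_movesAtMostOne]
    simp only [NoDistantInversion, not_exists, not_and, not_lt]
  rw [Nat.card_congr (subtypeEquivRight hiff)]
  exact card_movesAtMostOne n

/-- The number of permutations of `[n]` avoiding the distant pattern `2□1`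
(no inversion `(π i, π j)` with `j - i ≥ 2`) is the Fibonacci number `F (n+1)`
(with `F 1 = F 2 = 1`, i.e. `Nat.fib`). -/
theorem stmt0 (n : ℕ) (hn : 1 ≤ n) :
    Nat.card {π : Equiv.Perm (Fin n) //
      ¬ ∃ i j : Fin n, (i : ℕ) + 2 ≤ (j : ℕ) ∧ π j < π i} = Nat.fib (n + 1) :=
  stmt0_general n
end

section
/- The number of permutations of [n] with no inversion at distance greater than r (i.e., avoiding 2□^r 1) equals the number of permutations of [n] such that, in their cycle decomposition, any two elements in the same cycle differ by at most r. -/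
/-!
Put `w = π⁻¹`. Then `π` avoids `2□^r 1` iff every entry of `w` lies within `r` of the running
maximum of `w` at its position. Cut `w` before each left-to-right maximum and read every block
as a cycle (Foata's fundamental transformation): each cycle then has the running maximum of its
block as largest element, so the running-maximum condition on `w` becomes the cycle condition.
The transformation is injective because `w` is recovered by writing each cycle from its maximum
and listing the cycles by increasing maximum, i.e. by sorting along `cycleKey`.
-/

open Finset

namespace Equiv.Perm

variable {α : Type*} [Fintype α] [LinearOrder α] (σ : Perm α)

def cycleMax (x : α) : α :=
  (univ.filter (σ.SameCycle x)).max' ⟨x, mem_filter.2 ⟨mem_univ x, .refl σ x⟩⟩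

lemma sameCycle_cycleMax (x : α) : σ.SameCycle x (σ.cycleMax x) :=
  (mem_filter.1 (max'_mem _ _)).2

lemma le_cycleMax {x y : α} (h : σ.SameCycle x y) : y ≤ σ.cycleMax x :=
  le_max' _ _ (by simpa using h)

variable {σ} in
lemma cycleMax_eq {x y : α} (hy : σ.SameCycle x y) (h : ∀ z, σ.SameCycle x z → z ≤ y) :
    σ.cycleMax x = y :=
  le_antisymm (h _ (σ.sameCycle_cycleMax x)) (σ.le_cycleMax hy)

lemma exists_pow_cycleMax_eq (x : α) : ∃ k : ℕ, (σ ^ k) (σ.cycleMax x) = x :=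
  (σ.sameCycle_cycleMax x).symm.exists_nat_pow_eq

noncomputable def cycleOffset (x : α) : ℕ :=
  Nat.find (σ.exists_pow_cycleMax_eq x)

lemma pow_cycleOffset_cycleMax (x : α) : (σ ^ σ.cycleOffset x) (σ.cycleMax x) = x :=
  Nat.find_spec (σ.exists_pow_cycleMax_eq x)

variable {σ} in
lemma cycleOffset_eq {x : α} {k : ℕ} (hk : (σ ^ k) (σ.cycleMax x) = x)
    (hmin : ∀ j < k, (σ ^ j) (σ.cycleMax x) ≠ x) : σ.cycleOffset x = k :=
  (Nat.find_eq_iff _).2 ⟨hk, hmin⟩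

noncomputable def cycleKey (x : α) : α ×ₗ ℕ :=
  toLex (σ.cycleMax x, σ.cycleOffset x)

lemma cycleKey_injective : Function.Injective σ.cycleKey := by
  intro x y h
  obtain ⟨hmax, hoff⟩ := Prod.ext_iff.1 (toLex.injective h)
  rw [← σ.pow_cycleOffset_cycleMax x, ← σ.pow_cycleOffset_cycleMax y]
  exact congrArg₂ (fun k z => (σ ^ k) z) hoff hmax

end Equiv.Perm

namespace Foata

open Equiv Equiv.Perm

variable {n : ℕ}

def prefixMax (w : Perm (Fin n)) (i : Fin n) : Fin n :=
  (Iic i).sup' nonempty_Iic w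

def blockStart (w : Perm (Fin n)) (i : Fin n) : Fin n :=
  w.symm (prefixMax w i)

variable {w : Perm (Fin n)}

lemma le_prefixMax {i j : Fin n} (h : j ≤ i) : w j ≤ prefixMax w i :=
  le_sup' w (mem_Iic.2 h)

lemma prefixMax_mono : Monotone (prefixMax w) :=
  fun _ _ hij => sup'_le _ _ fun _ hk => le_prefixMax ((mem_Iic.1 hk).trans hij)

lemma apply_blockStart (i : Fin n) : w (blockStart w i) = prefixMax w i :=
  w.apply_symm_apply _

lemma blockStart_le (i : Fin n) : blockStart w i ≤ i := by
  obtain ⟨j, hj, hmax⟩ := exists_mem_eq_sup' (nonempty_Iic (a := i)) w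
  rw [blockStart, prefixMax, hmax, symm_apply_apply]
  exact mem_Iic.1 hj

lemma blockStart_eq_of_le {i j : Fin n} (h₁ : blockStart w j ≤ i) (h₂ : i ≤ j) :
    blockStart w i = blockStart w j := by
  have hmax : prefixMax w i = prefixMax w j :=
    le_antisymm (prefixMax_mono h₂) (apply_blockStart j ▸ le_prefixMax h₁)
  rw [blockStart, hmax, blockStart]

lemma blockStart_blockStart (i : Fin n) : blockStart w (blockStart w i) = blockStart w i :=
  blockStart_eq_of_le le_rfl (blockStart_le i)

variable (w) in
/-- The next position of the block of `i`, where the last position of a block is followed by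
its first one. -/
def blockSucc (i : Fin n) : Fin n :=
  if h : (i : ℕ) + 1 < n then
    if blockStart w ⟨i + 1, h⟩ = ⟨i + 1, h⟩ then blockStart w i else ⟨i + 1, h⟩
  else blockStart w i

lemma blockSucc_cases (i : Fin n) :
    (∃ h : (i : ℕ) + 1 < n, blockStart w ⟨i + 1, h⟩ ≠ ⟨i + 1, h⟩ ∧
        blockSucc w i = ⟨i + 1, h⟩) ∨
      ((∀ h : (i : ℕ) + 1 < n, blockStart w ⟨i + 1, h⟩ = ⟨i + 1, h⟩) ∧
        blockSucc w i = blockStart w i) := by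
  unfold blockSucc
  split_ifs with h hrec
  · exact .inr ⟨fun _ => hrec, rfl⟩
  · exact .inl ⟨h, hrec, rfl⟩
  · exact .inr ⟨fun h' => absurd h' h, rfl⟩

lemma blockStart_eq_of_succ {i j : Fin n} (hj : (j : ℕ) = i + 1) (hrec : blockStart w j ≠ j) :
    blockStart w i = blockStart w j := by
  have : (blockStart w j : ℕ) < j := Fin.lt_def.1 ((blockStart_le j).lt_of_ne hrec)
  exact blockStart_eq_of_le (Fin.le_def.2 (by omega)) (Fin.le_def.2 (by omega))

lemma blockStart_blockSucc (i : Fin n) : blockStart w (blockSucc w i) = blockStart w i := by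
  rcases blockSucc_cases (w := w) i with ⟨_, hrec, hsucc⟩ | ⟨_, hstart⟩
  · rw [hsucc, blockStart_eq_of_succ rfl hrec]
  · rw [hstart, blockStart_blockStart]

lemma not_lt_of_blockStart_eq {i j : Fin n}
    (hlast : ∀ h : (i : ℕ) + 1 < n, blockStart w ⟨i + 1, h⟩ = ⟨i + 1, h⟩)
    (hij : blockStart w i = blockStart w j) : ¬ i < j := by
  intro hlt
  have hlt' := Fin.lt_def.1 hlt
  have hstart := Fin.le_def.1 (blockStart_le (w := w) i)
  have hi : (i : ℕ) + 1 < n := by omega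
  have hnext := blockStart_eq_of_le (w := w) (i := ⟨i + 1, hi⟩) (j := j)
    (Fin.le_def.2 (by rw [← hij]; dsimp only; omega)) (Fin.le_def.2 (by dsimp only; omega))
  rw [hlast hi, ← hij, Fin.ext_iff] at hnext
  dsimp only at hnext
  omega

lemma blockSucc_injective : Function.Injective (blockSucc w) := by
  intro i j hij
  rcases blockSucc_cases (w := w) i with ⟨hi, hreci, hsi⟩ | ⟨hlasti, hsi⟩ <;>
    rcases blockSucc_cases (w := w) j with ⟨hj, hrecj, hsj⟩ | ⟨hlastj, hsj⟩ <;>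
    rw [hsi, hsj] at hij
  · exact Fin.ext (by simpa using hij)
  · exact absurd (hij ▸ blockStart_blockStart j) hreci
  · exact absurd (hij ▸ blockStart_blockStart i) hrecj
  · exact le_antisymm (not_lt.1 (not_lt_of_blockStart_eq hlastj hij.symm))
      (not_lt.1 (not_lt_of_blockStart_eq hlasti hij))

variable (w) in
noncomputable def blockRotate : Perm (Fin n) :=
  Equiv.ofBijective (blockSucc w) (Finite.injective_iff_bijective.1 blockSucc_injective)

lemma blockRotate_apply (i : Fin n) : blockRotate w i = blockSucc w i := rfl

lemma blockStart_blockRotate_pow (k : ℕ) (i : Fin n) :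
    blockStart w ((blockRotate w ^ k) i) = blockStart w i := by
  induction k with
  | zero => rfl
  | succ k ih => rw [pow_succ', mul_apply, blockRotate_apply, blockStart_blockSucc, ih]

lemma val_blockRotate_pow_blockStart {i : Fin n} {k : ℕ} (hk : (blockStart w i : ℕ) + k ≤ i) :
    ((blockRotate w ^ k) (blockStart w i) : ℕ) = blockStart w i + k := by
  induction k with
  | zero => rfl
  | succ k ih =>
    set t := (blockRotate w ^ k) (blockStart w i)
    have ht : (t : ℕ) = blockStart w i + k := ih (by omega)
    have hnext : (t : ℕ) + 1 < n := by omega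
    have hblock : blockStart w ⟨t + 1, hnext⟩ = blockStart w i :=
      blockStart_eq_of_le (Fin.le_def.2 (by dsimp only; omega)) (Fin.le_def.2 (by dsimp only; omega))
    have hrec : blockStart w ⟨t + 1, hnext⟩ ≠ ⟨t + 1, hnext⟩ := by
      rw [hblock, Ne, Fin.ext_iff]
      dsimp only
      omega
    rw [pow_succ', mul_apply, blockRotate_apply, blockSucc, dif_pos hnext, if_neg hrec]
    dsimp only
    omega

lemma sameCycle_blockStart (i : Fin n) : (blockRotate w).SameCycle (blockStart w i) i := by
  have hstart := Fin.le_def.1 (blockStart_le (w := w) i)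
  refine ⟨((i - blockStart w i : ℕ) : ℤ), ?_⟩
  rw [zpow_natCast]
  exact Fin.ext (by rw [val_blockRotate_pow_blockStart (by omega)]; omega)

lemma sameCycle_blockRotate_iff {i j : Fin n} :
    (blockRotate w).SameCycle i j ↔ blockStart w i = blockStart w j := by
  constructor
  · intro h
    obtain ⟨k, rfl⟩ := h.exists_nat_pow_eq
    exact (blockStart_blockRotate_pow k i).symm
  · intro h
    exact (sameCycle_blockStart i).symm.trans (h ▸ sameCycle_blockStart j)

variable (w) in
noncomputable def foata : Perm (Fin n) :=
  w * blockRotate w * w⁻¹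

lemma sameCycle_foata_apply_iff {i j : Fin n} :
    (foata w).SameCycle (w i) (w j) ↔ blockStart w i = blockStart w j := by
  rw [foata, sameCycle_conj]
  simpa using sameCycle_blockRotate_iff

lemma foata_pow_apply (k : ℕ) (i : Fin n) : (foata w ^ k) (w i) = w ((blockRotate w ^ k) i) := by
  simp [foata, conj_pow]

lemma cycleMax_foata_apply (i : Fin n) : (foata w).cycleMax (w i) = w (blockStart w i) := by
  refine cycleMax_eq (sameCycle_foata_apply_iff.2 (blockStart_blockStart i).symm) ?_
  intro z hz
  obtain ⟨j, rfl⟩ := w.surjective z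
  rw [sameCycle_foata_apply_iff.1 hz, apply_blockStart]
  exact le_prefixMax le_rfl

lemma cycleOffset_foata_apply (i : Fin n) :
    (foata w).cycleOffset (w i) = i - blockStart w i := by
  have hstart := Fin.le_def.1 (blockStart_le (w := w) i)
  refine cycleOffset_eq ?_ fun k hk => ?_
  · rw [cycleMax_foata_apply, foata_pow_apply, EmbeddingLike.apply_eq_iff_eq]
    exact Fin.ext (by rw [val_blockRotate_pow_blockStart (by omega)]; omega)
  · rw [cycleMax_foata_apply, foata_pow_apply, Ne, EmbeddingLike.apply_eq_iff_eq, Fin.ext_iff,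
      val_blockRotate_pow_blockStart (by omega)]
    omega

variable (w) in
lemma foata_cycleKey_strictMono : StrictMono ((foata w).cycleKey ∘ w) := by
  intro i j hij
  simp only [Function.comp_apply, cycleKey, cycleMax_foata_apply, cycleOffset_foata_apply,
    Prod.Lex.toLex_lt_toLex]
  by_cases hblock : blockStart w i = blockStart w j
  · have hstart := Fin.le_def.1 (hblock ▸ blockStart_le (w := w) i)
    exact .inr ⟨congrArg w hblock, by rw [hblock]; have := Fin.lt_def.1 hij; omega⟩
  · rw [apply_blockStart, apply_blockStart]
    refine .inl ((prefixMax_mono hij.le).lt_of_ne fun hmax => hblock ?_)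
    rw [blockStart, hmax, blockStart]

lemma foata_injective : Function.Injective (foata (n := n)) := by
  intro w w' h
  have hw' : StrictMono ((foata w).cycleKey ∘ w') := h ▸ foata_cycleKey_strictMono w'
  have hkey := ((foata_cycleKey_strictMono w).range_inj hw').1 <| by
    rw [Set.range_comp, Set.range_comp, EquivLike.range_eq_univ, EquivLike.range_eq_univ]
  exact Equiv.ext fun i => (foata w).cycleKey_injective (congrFun hkey i)

noncomputable def foataEquiv : Perm (Fin n) ≃ Perm (Fin n) :=
  Equiv.ofBijective foata (Finite.injective_iff_bijective.1 foata_injective)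

variable (w) in
lemma forall_le_add_iff_prefixMax_le (r : ℕ) :
    (∀ a b, a ≤ b → (w a : ℕ) ≤ w b + r) ↔ ∀ b, (prefixMax w b : ℕ) ≤ w b + r := by
  constructor
  · intro h b
    rw [← apply_blockStart]
    exact h _ _ (blockStart_le b)
  · intro h a b hab
    exact (Fin.le_def.1 (le_prefixMax hab)).trans (h b)

variable (w) in
lemma sameCycle_foata_le_add_iff (r : ℕ) :
    (∀ x y, (foata w).SameCycle x y → (x : ℕ) ≤ y + r) ↔
      ∀ b, (prefixMax w b : ℕ) ≤ w b + r := by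
  constructor
  · intro h b
    rw [← apply_blockStart]
    exact h _ _ (sameCycle_foata_apply_iff.2 (blockStart_blockStart b))
  · intro h x y hxy
    obtain ⟨i, rfl⟩ := w.surjective x
    obtain ⟨j, rfl⟩ := w.surjective y
    have hmax : prefixMax w i = prefixMax w j := by
      rw [← apply_blockStart, ← apply_blockStart, sameCycle_foata_apply_iff.1 hxy]
    exact (Fin.le_def.1 (hmax ▸ le_prefixMax le_rfl)).trans (h j)

end Foata

lemma not_exists_far_inversion_iff {n : ℕ} (r : ℕ) (π : Equiv.Perm (Fin n)) :
    (¬ ∃ i j : Fin n, (i : ℕ) + r + 1 ≤ (j : ℕ) ∧ π j < π i) ↔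
      ∀ a b, a ≤ b → (π⁻¹ a : ℕ) ≤ π⁻¹ b + r := by
  constructor
  · intro h a b hab
    by_contra hfar
    refine h ⟨π⁻¹ b, π⁻¹ a, by omega, ?_⟩
    simp only [Equiv.Perm.coe_inv, Equiv.apply_symm_apply]
    exact hab.lt_of_ne fun hab => by simp [hab] at hfar
  · rintro h ⟨i, j, hij, hlt⟩
    have := h (π j) (π i) hlt.le
    simp only [Equiv.Perm.coe_inv, Equiv.symm_apply_apply] at this
    omega

/-- The number of permutations of `[n]` with no inversion at distance greater than `r`
(i.e. avoiding `2□^r 1`) equals the number of permutations of `[n]` in which any two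
elements of the same cycle differ by at most `r`. -/
theorem stmt2 (n r : ℕ) :
    Nat.card {π : Equiv.Perm (Fin n) //
        ¬ ∃ i j : Fin n, (i : ℕ) + r + 1 ≤ (j : ℕ) ∧ π j < π i} =
    Nat.card {π : Equiv.Perm (Fin n) //
        ∀ a b : Fin n, π.SameCycle a b → (a : ℕ) ≤ (b : ℕ) + r} :=
  Nat.card_congr <| (Equiv.inv _).trans Foata.foataEquiv |>.subtypeEquiv fun π =>
    (not_exists_far_inversion_iff r π).trans <|
      (Foata.forall_le_add_iff_prefixMax_le π⁻¹ r).trans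
        (Foata.sameCycle_foata_le_add_iff π⁻¹ r).symm
end

section
/- Avoiding the distant pattern 1□2 is equivalent to simultaneously avoiding the three classical patterns 123, 132, and 213. That is, a permutation π of [n] has no pair of indices i, j with j ≥ i + 2 and π_i < π_j if and only if π contains none of the classical patterns 123, 132, 213. -/
/-! An occurrence of `123`, `132` or `213` at positions `i < j < k` has `π i < π k` with
`k ≥ i + 2`, so it is a distant `1□2`. Conversely, given a distant `1□2` at `i, k`, the entry at
`i + 1` is distinct from both, and the three values form one of `123`, `132`, `213`. -/

section

variable {α : Type*} [LinearOrder α] {n : ℕ}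

theorem Fin.add_two_le_of_lt_of_lt {i j k : Fin n} (hij : i < j) (hjk : j < k) :
    (i : ℕ) + 2 ≤ k := by
  omega

theorem Fin.exists_between_of_add_two_le {i k : Fin n} (h : (i : ℕ) + 2 ≤ k) :
    ∃ j : Fin n, i < j ∧ j < k :=
  ⟨⟨i + 1, by omega⟩, Fin.mk_lt_mk.mpr (by omega), Fin.lt_def.mpr (by simp only; omega)⟩

theorem lt_lt_or_lt_lt_or_lt_lt_of_ne {a b c : α} (hab : a ≠ b) (hbc : b ≠ c) (hac : a < c) :
    (a < b ∧ b < c) ∨ (a < c ∧ c < b) ∨ (b < a ∧ a < c) := by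
  rcases hab.lt_or_gt with hab | hba
  · rcases hbc.lt_or_gt with hbc | hcb
    exacts [Or.inl ⟨hab, hbc⟩, Or.inr (Or.inl ⟨hac, hcb⟩)]
  · exact Or.inr (Or.inr ⟨hba, hac⟩)

end

/-- Avoiding the distant pattern `1□2` is equivalent to simultaneously avoiding the
classical patterns `123`, `132` and `213`. -/
theorem stmt5 (n : ℕ) (π : Equiv.Perm (Fin n)) :
    (¬ ∃ i j : Fin n, (i : ℕ) + 2 ≤ (j : ℕ) ∧ π i < π j) ↔
      ((¬ ∃ i j k : Fin n, i < j ∧ j < k ∧ π i < π j ∧ π j < π k) ∧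
       (¬ ∃ i j k : Fin n, i < j ∧ j < k ∧ π i < π k ∧ π k < π j) ∧
       (¬ ∃ i j k : Fin n, i < j ∧ j < k ∧ π j < π i ∧ π i < π k)) := by
  constructor
  · intro h
    refine ⟨?_, ?_, ?_⟩ <;> rintro ⟨i, j, k, hij, hjk, h₁, h₂⟩ <;>
      exact h ⟨i, k, Fin.add_two_le_of_lt_of_lt hij hjk, by order⟩
  · rintro ⟨h123, h132, h213⟩ ⟨i, k, hik, hlt⟩
    obtain ⟨j, hij, hjk⟩ := Fin.exists_between_of_add_two_le hik
    rcases lt_lt_or_lt_lt_or_lt_lt_of_ne (π.injective.ne hij.ne) (π.injective.ne hjk.ne) hlt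
      with h | h | h
    exacts [h123 ⟨i, j, k, hij, hjk, h⟩, h132 ⟨i, j, k, hij, hjk, h⟩, h213 ⟨i, j, k, hij, hjk, h⟩]
end

section
/- The Fibonacci numbers satisfy the identity F_{n+1} = n + Σ_{k=1}^{n-3} (n - (k+2)·F_{n-(k+1)})·k·k!, for all n ≥ 4, where F_1 = F_2 = 1. -/
/-!
The weight `(k + 2) * k * k!` equals `(k + 2)! - (k + 1)! - k!`, the amount by which the factorials
fail the Fibonacci recurrence. Any sequence is the solution of the homogeneous recurrence with the
same initial values plus the convolution of this defect with the Fibonacci numbers, so the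
convolution in the identity evaluates to a factorial minus a Fibonacci number; the remaining sum
`∑ k * k!` telescopes.
-/

open Finset Nat

theorem apply_succ_eq_fib_mul_add_sum_mul_fib {R : Type*} [CommRing R] (a : ℕ → R) (n : ℕ) :
    a (n + 1) = fib (n + 1) * a 1 + fib n * a 0 +
      ∑ k ∈ range n, (a (k + 2) - a (k + 1) - a k) * fib (n - k) := by
  induction n using Nat.twoStepInduction with
  | zero => simp
  | one => simp
  | more n ih₀ ih₁ =>
    have hsplit : ∑ k ∈ range n, (a (k + 2) - a (k + 1) - a k) * (fib (n + 2 - k) : R) =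
        ∑ k ∈ range n, (a (k + 2) - a (k + 1) - a k) * fib (n + 1 - k) +
          ∑ k ∈ range n, (a (k + 2) - a (k + 1) - a k) * fib (n - k) := by
      rw [← sum_add_distrib]
      refine sum_congr rfl fun k hk => ?_
      rw [show n + 2 - k = n - k + 2 by grind, show n + 1 - k = n - k + 1 by grind, fib_add_two]
      push_cast
      ring
    simp only [sum_range_succ, fib_add_two] at ih₁ ⊢
    rw [hsplit]
    simp only [show n + 2 - n = 2 by omega, show n + 2 - (n + 1) = 1 by omega,
      show n + 1 - n = 1 by omega, fib_one, fib_two] at ih₁ ⊢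
    push_cast at ih₀ ih₁ ⊢
    linear_combination ih₀ + ih₁

theorem factorial_sub_factorial_sub_factorial (k : ℕ) :
    ((k + 2)! - (k + 1)! - k ! : ℤ) = (k + 2) * k * k ! := by
  simp only [factorial_succ]
  push_cast
  ring

theorem factorial_succ_eq_fib_add_sum_mul_fib (n : ℕ) :
    ((n + 1)! : ℤ) = fib (n + 2) + ∑ k ∈ range n, (k + 2 : ℤ) * k * k ! * fib (n - k) := by
  simpa [factorial_sub_factorial_sub_factorial, fib_add_two, add_comm] using
    apply_succ_eq_fib_mul_add_sum_mul_fib (fun k => (k ! : ℤ)) n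

theorem sum_range_mul_factorial (n : ℕ) : ∑ k ∈ range n, (k * k ! : ℤ) = (n ! : ℤ) - 1 := by
  have htelescope := sum_range_sub (fun k => (k ! : ℤ)) n
  rw [factorial_zero, cast_one] at htelescope
  rw [← htelescope]
  refine sum_congr rfl fun k _ => ?_
  push_cast [factorial_succ]
  ring

theorem sum_range_sub_mul_fib_mul_factorial (n : ℕ) :
    ∑ k ∈ range n, ((n + 1 : ℤ) - (k + 2) * fib (n - k)) * k * k ! = fib (n + 2) - (n + 1) := by
  have hsplit : ∑ k ∈ range n, ((n + 1 : ℤ) - (k + 2) * fib (n - k)) * k * k ! =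
      (n + 1) * ∑ k ∈ range n, (k * k ! : ℤ) -
        ∑ k ∈ range n, (k + 2 : ℤ) * k * k ! * fib (n - k) := by
    rw [mul_sum, ← sum_sub_distrib]
    refine sum_congr rfl fun k _ => ?_
    ring
  have hconv := factorial_succ_eq_fib_add_sum_mul_fib n
  rw [hsplit, sum_range_mul_factorial]
  rw [factorial_succ] at hconv
  push_cast at hconv ⊢
  linear_combination hconv

/-- The Fibonacci identity
`F (n+1) = n + ∑_{k=1}^{n-3} (n - (k+2) F (n-(k+1))) k k!` for `n ≥ 4`,
with `F 1 = F 2 = 1` (i.e. `Nat.fib`). -/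
theorem stmt6 (n : ℕ) (hn : 4 ≤ n) :
    (Nat.fib (n + 1) : ℤ) =
      (n : ℤ) + ∑ k ∈ Finset.Icc 1 (n - 3),
        ((n : ℤ) - ((k : ℤ) + 2) * (Nat.fib (n - (k + 1)) : ℤ)) * (k : ℤ) *
          (Nat.factorial k : ℤ) := by
  obtain ⟨l, rfl⟩ : ∃ l, n = l + 4 := ⟨n - 4, by omega⟩
  -- the summand vanishes at `k = 0` and at `k = n - 2`, so the sum may run over `range (n - 1)`
  have hsum : ∑ k ∈ Icc 1 (l + 4 - 3),
      (((l + 4 : ℕ) : ℤ) - ((k : ℤ) + 2) * fib (l + 4 - (k + 1))) * k * (k ! : ℤ) =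
      ∑ k ∈ range (l + 3), ((((l + 3 : ℕ) : ℤ) + 1) - (k + 2) * fib (l + 3 - k)) * k * k ! := by
    rw [sum_range_succ, sum_range_succ', ← Ico_add_one_right_eq_Icc, sum_Ico_eq_sum_range]
    have htop : l + 3 - (l + 2) = 1 := by omega
    rw [htop, fib_one, show l + 4 - 3 + 1 - 1 = l + 1 by omega]
    refine (sum_congr rfl fun k _ => ?_).trans (by push_cast; ring)
    rw [add_comm 1 k, show l + 4 - (k + 1 + 1) = l + 3 - (k + 1) by omega]
    push_cast
    ring
  rw [hsum, sum_range_sub_mul_fib_mul_factorial]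
  push_cast
  ring
end

section
/- For every n ≥ 1, a permutation of [n] avoids the vincular distant pattern 13□2 (with 1, 3 adjacent and a gap of at least one before 2) if and only if it avoids the classical distant pattern 13□2 (with no adjacency requirement). Hence |Av_n(vincular 13□2)| = |Av_n(13□2)|. -/
/-- `π` contains the vincular pattern `13□2`: there are `i`, `k` with `k ≥ i + 3`
and `π i < π k < π (i+1)`. -/
def ContainsVinc13sq2 (n : ℕ) (π : Equiv.Perm (Fin n)) : Prop :=
  ∃ i k : Fin n, ∃ h : (i : ℕ) + 1 < n,
    (i : ℕ) + 3 ≤ (k : ℕ) ∧ π i < π k ∧ π k < π ⟨(i : ℕ) + 1, h⟩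

/-- `π` contains the classical distant pattern `13□2`: there are `i < j` and
`k ≥ j + 2` with `π i < π k < π j`. -/
def ContainsCl13sq2 (n : ℕ) (π : Equiv.Perm (Fin n)) : Prop :=
  ∃ i j k : Fin n, i < j ∧ (j : ℕ) + 2 ≤ (k : ℕ) ∧ π i < π k ∧ π k < π j

/-!
Given `π i < π k < π j` with `i < j` and `k ≥ j + 2`, walk from `i` towards `j`: the last
position `m` in `[i, j)` with `π m ≤ π k` is followed by a value above `π k`. Since `m < k`
and `π` is injective, `π m < π k < π (m + 1)`, an occurrence of the vincular pattern with
`k ≥ m + 3`.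
-/

theorem Fin.exists_le_lt_succ_of_le {α : Type*} [LinearOrder α] {n : ℕ} (f : Fin n → α)
    {c : α} {i j : Fin n} (hij : i ≤ j) (hi : f i ≤ c) (hj : c < f j) :
    ∃ m : Fin n, ∃ h : (m : ℕ) + 1 < n,
      i ≤ m ∧ (m : ℕ) < j ∧ f m ≤ c ∧ c < f ⟨m + 1, h⟩ := by
  obtain ⟨j, hjn⟩ := j
  induction j generalizing i with
  | zero =>
    obtain rfl : i = ⟨0, hjn⟩ := le_antisymm hij (Fin.le_def.2 (Nat.zero_le _))
    exact absurd hj (not_lt.2 hi)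
  | succ j ih =>
    have hij' : i ≤ ⟨j, by omega⟩ := by
      simp only [Fin.le_def] at hij ⊢
      rcases (show (i : ℕ) ≤ j ∨ (i : ℕ) = j + 1 by omega) with h | h
      · exact h
      · obtain rfl : i = ⟨j + 1, hjn⟩ := Fin.ext h
        exact absurd hj (not_lt.2 hi)
    by_cases hprev : c < f ⟨j, by omega⟩
    · obtain ⟨m, hm, him, hmj, hmc, hcm⟩ := ih hi (by omega) hij' hprev
      exact ⟨m, hm, him, by simp only at hmj ⊢; omega, hmc, hcm⟩
    · exact ⟨⟨j, by omega⟩, hjn, hij', by simp, not_lt.1 hprev, hj⟩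

theorem containsCl13sq2_of_containsVinc13sq2 {n : ℕ} {π : Equiv.Perm (Fin n)}
    (h : ContainsVinc13sq2 n π) : ContainsCl13sq2 n π := by
  obtain ⟨i, k, hi, hik, hlo, hhi⟩ := h
  exact ⟨i, ⟨i + 1, hi⟩, k, Fin.lt_def.2 (Nat.lt_succ_self _), by simp only; omega, hlo, hhi⟩

theorem containsVinc13sq2_of_containsCl13sq2 {n : ℕ} {π : Equiv.Perm (Fin n)}
    (h : ContainsCl13sq2 n π) : ContainsVinc13sq2 n π := by
  obtain ⟨i, j, k, hij, hjk, hlo, hhi⟩ := h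
  obtain ⟨m, hm, -, hmj, hmk, hkm⟩ := Fin.exists_le_lt_succ_of_le π hij.le hlo.le hhi
  have hmk' : π m ≠ π k := fun heq => by
    have := congrArg Fin.val (π.injective heq)
    omega
  exact ⟨m, k, hm, by omega, lt_of_le_of_ne hmk hmk', hkm⟩

theorem containsVinc13sq2_iff_containsCl13sq2 {n : ℕ} (π : Equiv.Perm (Fin n)) :
    ContainsVinc13sq2 n π ↔ ContainsCl13sq2 n π :=
  ⟨containsCl13sq2_of_containsVinc13sq2, containsVinc13sq2_of_containsCl13sq2⟩

theorem stmt11_general (n : ℕ) :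
    (∀ π : Equiv.Perm (Fin n), ¬ ContainsVinc13sq2 n π ↔ ¬ ContainsCl13sq2 n π) ∧
    Nat.card {π : Equiv.Perm (Fin n) // ¬ ContainsVinc13sq2 n π} =
      Nat.card {π : Equiv.Perm (Fin n) // ¬ ContainsCl13sq2 n π} := by
  have avoid_iff (π : Equiv.Perm (Fin n)) :=
    not_congr (containsVinc13sq2_iff_containsCl13sq2 π)
  exact ⟨avoid_iff, Nat.card_congr (Equiv.subtypeEquivRight avoid_iff)⟩

/-- Avoiding the vincular `13□2` is the same as avoiding the classical distant
pattern `13□2`; hence the avoidance sets have the same cardinality. -/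
theorem stmt11 (n : ℕ) (hn : 1 ≤ n) :
    (∀ π : Equiv.Perm (Fin n), ¬ ContainsVinc13sq2 n π ↔ ¬ ContainsCl13sq2 n π) ∧
    Nat.card {π : Equiv.Perm (Fin n) // ¬ ContainsVinc13sq2 n π} =
      Nat.card {π : Equiv.Perm (Fin n) // ¬ ContainsCl13sq2 n π} :=
  stmt11_general n
end

section
/- For every n ≥ 5, the number of permutations of [n] avoiding the pattern 12□3 (with 12 adjacent, gap at least 1 before 3) is strictly greater than the number avoiding 13□2 (with 13 adjacent, gap at least 1 before 2). -/
/-- `π` contains the vincular pattern `12□3`: there are `i`, `k` with `k ≥ i + 3`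
and `π i < π (i+1) < π k`. -/
def ContainsV12sq3 (n : ℕ) (π : Equiv.Perm (Fin n)) : Prop :=
  ∃ i k : Fin n, ∃ h : (i : ℕ) + 1 < n,
    (i : ℕ) + 3 ≤ (k : ℕ) ∧ π i < π ⟨(i : ℕ) + 1, h⟩ ∧ π ⟨(i : ℕ) + 1, h⟩ < π k

/-- `π` contains the vincular pattern `13□2`: there are `i`, `k` with `k ≥ i + 3`
and `π i < π k < π (i+1)`. -/
def ContainsV13sq2 (n : ℕ) (π : Equiv.Perm (Fin n)) : Prop :=
  ∃ i k : Fin n, ∃ h : (i : ℕ) + 1 < n,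
    (i : ℕ) + 3 ≤ (k : ℕ) ∧ π i < π k ∧ π k < π ⟨(i : ℕ) + 1, h⟩

/-!
Let `a_m(t)` and `b_m(t)` count the permutations of length `m` starting with `t` that avoid `12□3`,
resp. `13□2`. Removing the first entry, an occurrence either survives in the remaining entries or
starts at position `0`, and the latter is controlled by the next few entries. A
`12□3`-avoider starting with `t ≤ m - 3` may continue with any value below `t`, with `m - 1`, or
with `m - 2, m - 1`; a `13□2`-avoider starting with `t` must continue with a value at most `t + 1`
or with `t + 2, t + 1`. Hence
  `a_m(t) ≥ ∑_{s < t} a_{m-1}(s) + |Av_{m-3}(12□3)| + |Av_{m-2}(12□3)|`,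
  `b_m(t) ≤ ∑_{s ≤ t} b_{m-1}(s) + |Av_{m-3}(13□2)|`,
and since `b_{m-1}(t) ≤ |Av_{m-2}(13□2)|`, the inequalities `b_m ≤ a_m` (pointwise) and
`|Av_m(13□2)| < |Av_m(12□3)|` propagate by induction from a direct computation for `m ≤ 6`.
-/

namespace Vincular

open Equiv Finset

section Cons

variable {n : ℕ}

/-- The permutation of `Fin (n + 1)` with first entry `p` whose remaining entries are in the
relative order of `σ`. -/
def cons (p : Fin (n + 1)) (σ : Perm (Fin n)) : Perm (Fin (n + 1)) :=
  (finSuccEquiv n).trans ((optionCongr σ).trans (finSuccEquiv' p).symm)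

@[simp] lemma cons_zero (p : Fin (n + 1)) (σ : Perm (Fin n)) : cons p σ 0 = p := by
  simp [cons]

@[simp] lemma cons_succ (p : Fin (n + 1)) (σ : Perm (Fin n)) (j : Fin n) :
    cons p σ j.succ = p.succAbove (σ j) := by
  simp [cons]

lemma cons_injective :
    Function.Injective fun x : Fin (n + 1) × Perm (Fin n) => cons x.1 x.2 := by
  rintro ⟨p, σ⟩ ⟨p', σ'⟩ h
  simp only at h
  have hp : p = p' := by simpa using congr($h 0)
  subst hp
  refine Prod.ext rfl (Equiv.ext fun j => Fin.succAbove_right_injective (p := p) ?_)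
  simpa using congr($h j.succ)

lemma cons_right_injective (p : Fin (n + 1)) : Function.Injective (cons p) :=
  fun _ _ h => congrArg Prod.snd (cons_injective (a₁ := (p, _)) (a₂ := (p, _)) h)

noncomputable def consEquiv : Fin (n + 1) × Perm (Fin n) ≃ Perm (Fin (n + 1)) :=
  .ofBijective _ <| (Fintype.bijective_iff_injective_and_card _).2
    ⟨cons_injective, by simp [Fintype.card_perm, Nat.factorial_succ]⟩

lemma exists_eq_cons (π : Perm (Fin (n + 1))) : ∃ p σ, π = cons p σ :=
  let ⟨⟨p, σ⟩, h⟩ := consEquiv.surjective π; ⟨p, σ, h.symm⟩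

lemma card_filter_eq_sum_cons (P : Perm (Fin (n + 1)) → Prop) [DecidablePred P] :
    #{π | P π} = ∑ p, #{σ | P (cons p σ)} := by
  simp only [card_filter]
  rw [← consEquiv.sum_comp, Fintype.sum_prod_type]
  rfl

end Cons

def Occurs (R : ℕ → ℕ → ℕ → Prop) {m : ℕ} (π : Perm (Fin m)) : Prop :=
  ∃ i k : Fin m, ∃ h : (i : ℕ) + 1 < m,
    (i : ℕ) + 3 ≤ (k : ℕ) ∧ R (π i) (π ⟨i + 1, h⟩) (π k)

section Occurs

variable {R : ℕ → ℕ → ℕ → Prop} {n : ℕ}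

lemma occurs_iff_castSucc {m : ℕ} (π : Perm (Fin (m + 1))) :
    Occurs R π ↔ ∃ (i : Fin m) (k : Fin (m + 1)),
      (i : ℕ) + 3 ≤ (k : ℕ) ∧ R (π i.castSucc) (π i.succ) (π k) := by
  constructor
  · rintro ⟨i, k, h, hk, hR⟩
    exact ⟨⟨i, by omega⟩, k, hk, hR⟩
  · rintro ⟨i, k, hk, hR⟩
    exact ⟨i.castSucc, k, by simp, hk, hR⟩

theorem occurs_cons_iff
    (hR : ∀ {m m' : ℕ} (f : Fin m ↪o Fin m') (a b c : Fin m),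
      R (f a) (f b) (f c) ↔ R a b c)
    (p : Fin (n + 2)) (σ : Perm (Fin (n + 1))) :
    Occurs R (cons p σ) ↔
      Occurs R σ ∨
        ∃ k : Fin (n + 1), 2 ≤ (k : ℕ) ∧ R p (p.succAbove (σ 0)) (p.succAbove (σ k)) := by
  have hS (a b c : Fin (n + 1)) := hR p.succAboveOrderEmb a b c
  simp only [Fin.succAboveOrderEmb_apply] at hS
  rw [occurs_iff_castSucc, occurs_iff_castSucc]
  constructor
  · rintro ⟨i, k, hk, hocc⟩
    obtain rfl | ⟨l, rfl⟩ := Fin.eq_zero_or_eq_succ k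
    · simp at hk
    obtain rfl | ⟨j, rfl⟩ := Fin.eq_zero_or_eq_succ i
    · simp only [Fin.castSucc_zero, cons_zero, cons_succ] at hocc
      exact .inr ⟨l, by simp at hk; omega, hocc⟩
    · rw [← Fin.succ_castSucc] at hocc
      simp only [cons_succ, hS] at hocc
      exact .inl ⟨j, l, by simp at hk; omega, hocc⟩
  · rintro (⟨j, l, hk, hocc⟩ | ⟨l, hl, hocc⟩)
    · refine ⟨j.succ, l.succ, by simp; omega, ?_⟩
      rw [← Fin.succ_castSucc]
      simpa only [cons_succ, hS] using hocc
    · refine ⟨0, l.succ, by simp; omega, ?_⟩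
      simpa only [Fin.castSucc_zero, cons_zero, cons_succ] using hocc

end Occurs

instance (n : ℕ) : DecidablePred (ContainsV12sq3 n) := fun π => by
  unfold ContainsV12sq3; infer_instance

instance (n : ℕ) : DecidablePred (ContainsV13sq2 n) := fun π => by
  unfold ContainsV13sq2; infer_instance

section Patterns

variable {n : ℕ}

-- `Prepend12sq3 p σ` says that `cons p σ` has an occurrence of `12□3` at position `0`
-- (see `containsV12sq3_cons_iff`); likewise for `Prepend13sq2`.
def Prepend12sq3 (t : ℕ) (σ : Perm (Fin (n + 1))) : Prop :=
  t ≤ (σ 0 : ℕ) ∧ ∃ k : Fin (n + 1), 2 ≤ (k : ℕ) ∧ σ 0 < σ k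

def Prepend13sq2 (t : ℕ) (σ : Perm (Fin (n + 1))) : Prop :=
  ∃ k : Fin (n + 1), 2 ≤ (k : ℕ) ∧ t ≤ (σ k : ℕ) ∧ σ k < σ 0

instance (t : ℕ) : DecidablePred (Prepend12sq3 (n := n) t) := fun σ => by
  unfold Prepend12sq3; infer_instance

instance (t : ℕ) : DecidablePred (Prepend13sq2 (n := n) t) := fun σ => by
  unfold Prepend13sq2; infer_instance

lemma lt_succAbove_iff_val_le (p : Fin (n + 1)) (i : Fin n) :
    p < p.succAbove i ↔ (p : ℕ) ≤ i := by
  rw [Fin.lt_succAbove_iff_le_castSucc, Fin.le_def, Fin.val_castSucc]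

theorem containsV12sq3_cons_iff (p : Fin (n + 2)) (σ : Perm (Fin (n + 1))) :
    ContainsV12sq3 (n + 2) (cons p σ) ↔ ContainsV12sq3 (n + 1) σ ∨ Prepend12sq3 p σ := by
  refine (occurs_cons_iff (R := fun a b c => a < b ∧ b < c) ?_ p σ).trans (or_congr .rfl ?_)
  · intro m m' f a b c
    simp only [Fin.val_fin_lt, f.lt_iff_lt]
  · simp only [Prepend12sq3, Fin.val_fin_lt, lt_succAbove_iff_val_le,
      Fin.succAbove_lt_succAbove_iff]
    tauto

theorem containsV13sq2_cons_iff (p : Fin (n + 2)) (σ : Perm (Fin (n + 1))) :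
    ContainsV13sq2 (n + 2) (cons p σ) ↔ ContainsV13sq2 (n + 1) σ ∨ Prepend13sq2 p σ := by
  refine (occurs_cons_iff (R := fun a b c => a < c ∧ c < b) ?_ p σ).trans (or_congr .rfl ?_)
  · intro m m' f a b c
    simp only [Fin.val_fin_lt, f.lt_iff_lt]
  · simp only [Prepend13sq2, Fin.val_fin_lt, lt_succAbove_iff_val_le,
      Fin.succAbove_lt_succAbove_iff]

lemma prepend12sq3_cons_iff {t : ℕ} (p : Fin (n + 2)) (σ : Perm (Fin (n + 1))) :
    Prepend12sq3 t (cons p σ) ↔ t ≤ p ∧ ∃ k : Fin (n + 1), 1 ≤ (k : ℕ) ∧ (p : ℕ) ≤ σ k := by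
  simp only [Prepend12sq3, cons_zero]
  refine and_congr .rfl ⟨?_, ?_⟩
  · rintro ⟨k, hk, hlt⟩
    obtain rfl | ⟨l, rfl⟩ := Fin.eq_zero_or_eq_succ k
    · simp at hk
    rw [cons_succ, lt_succAbove_iff_val_le] at hlt
    exact ⟨l, by simp at hk; omega, hlt⟩
  · rintro ⟨l, hl, hle⟩
    exact ⟨l.succ, by simp; omega, by rwa [cons_succ, lt_succAbove_iff_val_le]⟩

lemma prepend13sq2_cons_iff {t : ℕ} (p : Fin (n + 2)) (σ : Perm (Fin (n + 1))) :
    Prepend13sq2 t (cons p σ) ↔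
      ∃ k : Fin (n + 1), 1 ≤ (k : ℕ) ∧ t ≤ (p.succAbove (σ k) : ℕ) ∧ (σ k : ℕ) < p := by
  simp only [Prepend13sq2, cons_zero]
  constructor
  · rintro ⟨k, hk, hle, hlt⟩
    obtain rfl | ⟨l, rfl⟩ := Fin.eq_zero_or_eq_succ k
    · simp at hk
    rw [cons_succ, Fin.succAbove_lt_iff_castSucc_lt, Fin.lt_def] at hlt
    exact ⟨l, by simp at hk; omega, by rwa [cons_succ] at hle, hlt⟩
  · rintro ⟨l, hl, hle, hlt⟩
    refine ⟨l.succ, by simp; omega, by rwa [cons_succ], ?_⟩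
    rwa [cons_succ, Fin.succAbove_lt_iff_castSucc_lt, Fin.lt_def]

end Patterns

section Counting

variable {n : ℕ}

def av12 (m : ℕ) : ℕ := #{π : Perm (Fin m) | ¬ ContainsV12sq3 m π}

def av13 (m : ℕ) : ℕ := #{π : Perm (Fin m) | ¬ ContainsV13sq2 m π}

-- For `t ≤ n + 1` this counts the `12□3`-avoiders of length `n + 2` starting with `t`.
def avPrepend12 (n t : ℕ) : ℕ :=
  #{σ : Perm (Fin (n + 1)) | ¬ ContainsV12sq3 (n + 1) σ ∧ ¬ Prepend12sq3 t σ}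

def avPrepend13 (n t : ℕ) : ℕ :=
  #{σ : Perm (Fin (n + 1)) | ¬ ContainsV13sq2 (n + 1) σ ∧ ¬ Prepend13sq2 t σ}

def avPrepend12Cons (n t : ℕ) (p : Fin (n + 2)) : ℕ :=
  #{σ : Perm (Fin (n + 1)) |
    ¬ ContainsV12sq3 (n + 2) (cons p σ) ∧ ¬ Prepend12sq3 t (cons p σ)}

def avPrepend13Cons (n t : ℕ) (p : Fin (n + 2)) : ℕ :=
  #{σ : Perm (Fin (n + 1)) |
    ¬ ContainsV13sq2 (n + 2) (cons p σ) ∧ ¬ Prepend13sq2 t (cons p σ)}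

lemma av12_add_two (n : ℕ) : av12 (n + 2) = ∑ p : Fin (n + 2), avPrepend12 n p := by
  rw [av12, card_filter_eq_sum_cons]
  simp only [containsV12sq3_cons_iff, not_or]
  rfl

lemma av13_add_two (n : ℕ) : av13 (n + 2) = ∑ p : Fin (n + 2), avPrepend13 n p := by
  rw [av13, card_filter_eq_sum_cons]
  simp only [containsV13sq2_cons_iff, not_or]
  rfl

lemma avPrepend12_succ (n t : ℕ) :
    avPrepend12 (n + 1) t = ∑ p : Fin (n + 2), avPrepend12Cons n t p :=
  card_filter_eq_sum_cons _

lemma avPrepend13_succ (n t : ℕ) :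
    avPrepend13 (n + 1) t = ∑ p : Fin (n + 2), avPrepend13Cons n t p :=
  card_filter_eq_sum_cons _

lemma not_prepend12sq3_of_le {t : ℕ} (ht : n ≤ t) (σ : Perm (Fin (n + 1))) :
    ¬ Prepend12sq3 t σ := by
  rintro ⟨h0, k, -, hk⟩
  have := (σ k).isLt
  rw [Fin.lt_def] at hk
  omega

lemma not_prepend13sq2_of_le {t : ℕ} (ht : n ≤ t) (σ : Perm (Fin (n + 1))) :
    ¬ Prepend13sq2 t σ := by
  rintro ⟨k, -, hk0, hk⟩
  have := (σ 0).isLt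
  rw [Fin.lt_def] at hk
  omega

lemma avPrepend12_of_le {t : ℕ} (ht : n ≤ t) : avPrepend12 n t = av12 (n + 1) :=
  congrArg card (filter_congr fun σ _ => and_iff_left (not_prepend12sq3_of_le ht σ))

lemma avPrepend13_of_le {t : ℕ} (ht : n ≤ t) : avPrepend13 n t = av13 (n + 1) :=
  congrArg card (filter_congr fun σ _ => and_iff_left (not_prepend13sq2_of_le ht σ))

lemma avPrepend13_le_av13 (t : ℕ) : avPrepend13 n t ≤ av13 (n + 1) :=
  card_le_card (monotone_filter_right _ fun _ _ h => h.1)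

end Counting

section Bounds

variable {n : ℕ}

lemma not_prepend12sq3_cons_last (t : ℕ) (σ : Perm (Fin (n + 1))) :
    ¬ Prepend12sq3 t (cons (Fin.last (n + 1)) σ) := by
  rw [prepend12sq3_cons_iff]
  rintro ⟨-, k, -, hk⟩
  have := (σ k).isLt
  simp only [Fin.val_last] at hk
  omega

lemma avPrepend12Cons_of_lt {t : ℕ} {p : Fin (n + 2)} (hp : (p : ℕ) < t) :
    avPrepend12Cons n t p = avPrepend12 n p := by
  refine congrArg card (filter_congr fun σ _ => ?_)
  rw [containsV12sq3_cons_iff, prepend12sq3_cons_iff]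
  have : ¬ t ≤ p := by omega
  tauto

lemma avPrepend12Cons_last (t : ℕ) :
    avPrepend12Cons n t (Fin.last (n + 1)) = av12 (n + 1) :=
  congrArg card <| filter_congr fun σ _ => by
    simp [containsV12sq3_cons_iff, not_prepend12sq3_of_le, not_prepend12sq3_cons_last]

-- `cons p (cons (Fin.last _) τ)` begins with its two largest values, which start no occurrence.
lemma av12_le_avPrepend12Cons {t : ℕ} {p : Fin (n + 3)} (hp : (p : ℕ) = n + 1) :
    av12 (n + 1) ≤ avPrepend12Cons (n + 1) t p := by
  refine card_le_card_of_injOn (cons (Fin.last (n + 1))) (fun τ hτ => ?_)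
    (cons_right_injective _).injOn
  simp only [mem_coe, mem_filter, mem_univ, true_and] at hτ ⊢
  rw [containsV12sq3_cons_iff, containsV12sq3_cons_iff, prepend12sq3_cons_iff (p := p)]
  have hk : ¬ ∃ k : Fin (n + 2), 1 ≤ (k : ℕ) ∧ (p : ℕ) ≤ cons (Fin.last (n + 1)) τ k := by
    rintro ⟨k, hk, hle⟩
    obtain rfl | ⟨l, rfl⟩ := Fin.eq_zero_or_eq_succ k
    · simp at hk
    rw [cons_succ, Fin.succAbove_last_apply, Fin.val_castSucc] at hle
    have := (τ l).isLt
    omega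
  rw [Fin.val_last]
  exact ⟨by simpa [not_prepend12sq3_of_le, not_prepend12sq3_cons_last] using hτ,
    fun h => hk h.2⟩

lemma avPrepend13Cons_le (t : ℕ) (p : Fin (n + 2)) : avPrepend13Cons n t p ≤ avPrepend13 n p :=
  card_le_card <| monotone_filter_right _ fun σ _ h => by
    rw [containsV13sq2_cons_iff] at h
    tauto

-- Every value in `[t, p)` must sit right after `p`, so there is at most one such value.
lemma eq_add_one_of_not_prepend13sq2_cons {t : ℕ} {p : Fin (n + 2)} {σ : Perm (Fin (n + 1))}
    (hp : t < p) (h : ¬ Prepend13sq2 t (cons p σ)) : (p : ℕ) = t + 1 ∧ (σ 0 : ℕ) = t := by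
  have head : ∀ v : ℕ, t ≤ v → v < p → (σ 0 : ℕ) = v := by
    intro v htv hvp
    obtain ⟨j, hj⟩ := σ.surjective ⟨v, by omega⟩
    obtain rfl | ⟨l, rfl⟩ := Fin.eq_zero_or_eq_succ j
    · rw [hj]
    refine absurd ?_ h
    rw [prepend13sq2_cons_iff]
    refine ⟨l.succ, by simp, ?_, by rw [hj]; exact hvp⟩
    rwa [hj, Fin.succAbove_of_castSucc_lt _ _ (by rw [Fin.lt_def]; exact hvp)]
  have h₁ := head t le_rfl hp
  have h₂ := head (p - 1) (by omega) (by omega)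
  omega

lemma avPrepend13Cons_eq_zero {t : ℕ} {p : Fin (n + 2)} (hp : t + 2 ≤ p) :
    avPrepend13Cons n t p = 0 :=
  card_eq_zero.2 <| filter_eq_empty_iff.2 fun _ _ h =>
    absurd (eq_add_one_of_not_prepend13sq2_cons (by omega) h.2).1 (by omega)

lemma avPrepend13Cons_le_av13 {t : ℕ} {p : Fin (n + 3)} (hp : (p : ℕ) = t + 1) :
    avPrepend13Cons (n + 1) t p ≤ av13 (n + 1) := by
  have ht : t < n + 2 := by omega
  refine card_le_card_of_surjOn (cons ⟨t, ht⟩) fun σ hσ => ?_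
  simp only [mem_coe, mem_filter, mem_univ, true_and] at hσ
  obtain ⟨q, τ, rfl⟩ := exists_eq_cons σ
  obtain ⟨-, hq⟩ := eq_add_one_of_not_prepend13sq2_cons (by omega) hσ.2
  rw [cons_zero] at hq
  obtain rfl : q = ⟨t, ht⟩ := Fin.ext hq
  refine ⟨τ, ?_, rfl⟩
  simp only [mem_coe, mem_filter, mem_univ, true_and]
  have := hσ.1
  rw [containsV13sq2_cons_iff, containsV13sq2_cons_iff] at this
  tauto

end Bounds

section Induction

variable {n : ℕ}

lemma le_avPrepend12_add_two {t : ℕ} (ht : t ≤ n + 1) :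
    ∑ s ∈ range t, avPrepend12 (n + 1) s + av12 (n + 1) + av12 (n + 2) ≤
      avPrepend12 (n + 2) t := by
  rw [avPrepend12_succ, sum_fin_eq_sum_range, sum_range_succ, sum_range_succ,
    dif_pos (by omega), dif_pos (by omega)]
  gcongr ?_ + ?_ + ?_
  · calc ∑ s ∈ range t, avPrepend12 (n + 1) s
        = ∑ s ∈ range t, if h : s < n + 3 then avPrepend12Cons (n + 1) t ⟨s, h⟩ else 0 :=
          sum_congr rfl fun s hs => by
            rw [mem_range] at hs
            rw [dif_pos (by omega), avPrepend12Cons_of_lt hs]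
      _ ≤ _ := sum_le_sum_of_subset (range_mono ht)
  · exact av12_le_avPrepend12Cons rfl
  · exact (avPrepend12Cons_last t).ge

lemma avPrepend13_add_two_le (t : ℕ) :
    avPrepend13 (n + 2) t ≤ ∑ s ∈ range (t + 1), avPrepend13 (n + 1) s + av13 (n + 1) := by
  rw [avPrepend13_succ, sum_fin_eq_sum_range]
  calc _ ≤ ∑ s ∈ range (t + 2),
          if h : s < n + 3 then avPrepend13Cons (n + 1) t ⟨s, h⟩ else 0 :=
        sum_le_sum_of_ne_zero fun s _ hs => by
          rw [mem_range]
          by_contra! hst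
          split_ifs at hs
          exacts [hs (avPrepend13Cons_eq_zero hst), hs rfl]
    _ ≤ _ := by
      rw [sum_range_succ]
      gcongr with s
      · split_ifs
        exacts [avPrepend13Cons_le _ _, Nat.zero_le _]
      · split_ifs
        exacts [avPrepend13Cons_le_av13 rfl, Nat.zero_le _]

lemma av13_lt_av12_add_two (h : ∀ t, avPrepend13 n t ≤ avPrepend12 n t)
    (hlt : av13 (n + 1) < av12 (n + 1)) : av13 (n + 2) < av12 (n + 2) := by
  rw [av13_add_two, av12_add_two]
  refine sum_lt_sum (fun p _ => h p) ⟨Fin.last _, mem_univ _, ?_⟩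
  rwa [Fin.val_last, avPrepend13_of_le (Nat.le_add_right n 1),
    avPrepend12_of_le (Nat.le_add_right n 1)]

def Dominates (n : ℕ) : Prop :=
  (∀ t, avPrepend13 n t ≤ avPrepend12 n t) ∧ av13 (n + 1) < av12 (n + 1) ∧ av13 n ≤ av12 n

lemma Dominates.succ (h : Dominates (n + 1)) : Dominates (n + 2) := by
  obtain ⟨hpre, hlt, hle⟩ := h
  have hlt' := av13_lt_av12_add_two hpre hlt
  refine ⟨fun t => ?_, hlt', hlt.le⟩
  rcases le_or_gt (n + 2) t with ht | ht
  · rw [avPrepend13_of_le ht, avPrepend12_of_le ht]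
    exact hlt'.le
  calc avPrepend13 (n + 2) t
      ≤ ∑ s ∈ range t, avPrepend13 (n + 1) s + avPrepend13 (n + 1) t + av13 (n + 1) := by
        rw [← sum_range_succ]; exact avPrepend13_add_two_le t
    _ ≤ ∑ s ∈ range t, avPrepend12 (n + 1) s + av12 (n + 2) + av12 (n + 1) := by
        gcongr with s
        · exact hpre s
        · exact (avPrepend13_le_av13 t).trans hlt.le
    _ ≤ avPrepend12 (n + 2) t := by
        rw [add_right_comm]
        exact le_avPrepend12_add_two (by omega)

lemma dominates_four : Dominates 4 := by
  have h5 : av13 5 < av12 5 := by decide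
  refine ⟨fun t => ?_, h5, by decide⟩
  rcases le_or_gt 4 t with ht | ht
  · rw [avPrepend13_of_le ht, avPrepend12_of_le ht]
    exact h5.le
  · interval_cases t <;> decide

lemma dominates_add_four (k : ℕ) : Dominates (k + 4) := by
  induction k with
  | zero => exact dominates_four
  | succ k ih => exact ih.succ

end Induction

end Vincular

/-- For `n ≥ 5`, `|Av_n(12□3)| > |Av_n(13□2)|`. -/
theorem stmt12 (n : ℕ) (hn : 5 ≤ n) :
    Nat.card {π : Equiv.Perm (Fin n) // ¬ ContainsV12sq3 n π} >
      Nat.card {π : Equiv.Perm (Fin n) // ¬ ContainsV13sq2 n π} := by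
  obtain ⟨k, rfl⟩ := Nat.exists_eq_add_of_le' hn
  simp only [Nat.card_eq_fintype_card, Fintype.card_subtype]
  exact (Vincular.dominates_add_four k).2.1
end

section
/- For n ≥ 4 and 1 ≤ i ≤ n - 1, the number of permutations of [n] that avoid the vincular pattern 13□2 and begin with the value i is at most the number of (13□2)-avoiders of [n] beginning with n, which equals |Av_{n-1}(13□2)|; moreover the inequality is strict when 1 ≤ i ≤ n - 2. -/
/-!
A permutation with first letter `a` is determined by `a` and the standardisation `σ` of its
remaining letters (`consPerm a σ`). Standardisation preserves relative order, so an occurrence of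
`13□2` in `consPerm a σ` either lies inside `σ` or uses the first letter as its `1`. When the first
letter is the maximum the second kind cannot occur, so these avoiders correspond exactly to the
avoiders of length `n - 1`. For any other first letter `a`, `σ` still avoids `13□2`, so the
avoiders starting with `a` embed into those of length `n - 1`; when `a ≤ n - 2` the embedding misses
an explicit `σ`.
-/

open Equiv

def WordContainsV13sq2 {α : Type*} [LT α] {n : ℕ} (w : Fin n → α) : Prop :=
  ∃ i k : Fin n, ∃ h : (i : ℕ) + 1 < n, (i : ℕ) + 3 ≤ k ∧ w i < w k ∧ w k < w ⟨i + 1, h⟩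

theorem containsV13sq2_iff_word {n : ℕ} (π : Perm (Fin n)) :
    ContainsV13sq2 n π ↔ WordContainsV13sq2 ⇑π := Iff.rfl

theorem Fin.cons_mk_add_one {α : Type*} {m : ℕ} (x : α) (w : Fin m → α) (j : ℕ)
    (h : j + 1 < m + 1) :
    (Fin.cons x w : Fin (m + 1) → α) ⟨j + 1, h⟩ = w ⟨j, by omega⟩ :=
  Fin.cons_succ (α := fun _ => α) x w ⟨j, by omega⟩

section Word

variable {α : Type*} {m : ℕ}

theorem wordContainsV13sq2_comp_iff {β : Type*} [LinearOrder α] [Preorder β] {g : α → β}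
    (hg : StrictMono g) (w : Fin m → α) :
    WordContainsV13sq2 (g ∘ w) ↔ WordContainsV13sq2 w := by
  simp only [WordContainsV13sq2, Function.comp_apply, hg.lt_iff_lt]

theorem wordContainsV13sq2_cons_iff [LT α] (x : α) (w : Fin m → α) :
    WordContainsV13sq2 (Fin.cons x w : Fin (m + 1) → α) ↔
      WordContainsV13sq2 w ∨ ∃ k : Fin m, 2 ≤ (k : ℕ) ∧ x < w k ∧ w k < w ⟨0, k.pos⟩ := by
  constructor
  · rintro ⟨i, k, hi, hik, h1, h2⟩
    obtain ⟨k, rfl⟩ := Fin.exists_succ_eq.2 (show k ≠ 0 by rintro rfl; simp at hik)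
    cases i using Fin.cases with
    | zero =>
      exact .inr ⟨k, by simpa using hik, by simpa using h1, by simpa [Fin.cons_mk_add_one] using h2⟩
    | succ i =>
      refine .inl ⟨i, k, by simpa using hi, by simpa using hik, by simpa using h1, ?_⟩
      simpa [Fin.cons_mk_add_one] using h2
  · rintro (⟨i, k, hi, hik, h1, h2⟩ | ⟨k, hk, h1, h2⟩)
    · refine ⟨i.succ, k.succ, by simpa using hi, by simpa using hik, by simpa using h1, ?_⟩
      simpa [Fin.cons_mk_add_one] using h2
    · refine ⟨0, k.succ, by simpa using k.pos, by simpa using hk, by simpa using h1, ?_⟩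
      simpa [Fin.cons_mk_add_one] using h2

end Word

section ConsPerm

variable {m : ℕ}

def consPerm (a : Fin (m + 1)) (σ : Perm (Fin m)) : Perm (Fin (m + 1)) :=
  a.cycleRange.symm * Perm.decomposeFin.symm (0, σ)

theorem coe_consPerm (a : Fin (m + 1)) (σ : Perm (Fin m)) :
    ⇑(consPerm a σ) = Fin.cons a (a.succAbove ∘ σ) := by
  ext j
  cases j using Fin.cases with
  | zero => simp [consPerm, Perm.decomposeFin_symm_apply_zero, Fin.cycleRange_symm_zero]
  | succ j => simp [consPerm, Perm.decomposeFin_symm_apply_succ, Fin.cycleRange_symm_succ]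

theorem Equiv.Perm.decomposeFin_fst (π : Perm (Fin (m + 1))) :
    (Perm.decomposeFin π).1 = π 0 := by
  conv_rhs => rw [← Perm.decomposeFin.symm_apply_apply π]
  rw [Perm.decomposeFin_symm_apply_zero]

def consPermEquiv (a : Fin (m + 1)) : Perm (Fin m) ≃ {π : Perm (Fin (m + 1)) // π 0 = a} where
  toFun σ := ⟨consPerm a σ, by simp [coe_consPerm]⟩
  invFun π := (Perm.decomposeFin (a.cycleRange * π.1)).2
  left_inv σ := by
    dsimp only [consPerm]
    rw [← Perm.inv_def, mul_inv_cancel_left, Equiv.apply_symm_apply]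
  right_inv := by
    rintro ⟨π, hπ⟩
    have h0 : (Perm.decomposeFin (a.cycleRange * π)).1 = 0 := by
      simp [Perm.decomposeFin_fst, hπ, Fin.cycleRange_self]
    ext1
    simp only [consPerm]
    rw [← h0, Prod.mk.eta, Equiv.symm_apply_apply, ← Perm.inv_def, inv_mul_cancel_left]

end ConsPerm

section Counting

variable {m : ℕ}

theorem containsV13sq2_consPerm_iff (a : Fin (m + 1)) (σ : Perm (Fin m)) :
    ContainsV13sq2 (m + 1) (consPerm a σ) ↔
      ContainsV13sq2 m σ ∨
        ∃ k : Fin m, 2 ≤ (k : ℕ) ∧ a < a.succAbove (σ k) ∧ σ k < σ ⟨0, k.pos⟩ := by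
  rw [containsV13sq2_iff_word, coe_consPerm, wordContainsV13sq2_cons_iff,
    wordContainsV13sq2_comp_iff (Fin.strictMono_succAbove a), ← containsV13sq2_iff_word]
  simp only [Function.comp_apply, Fin.succAbove_lt_succAbove_iff]

theorem containsV13sq2_consPerm_last_iff (σ : Perm (Fin m)) :
    ContainsV13sq2 (m + 1) (consPerm (Fin.last m) σ) ↔ ContainsV13sq2 m σ := by
  simp [containsV13sq2_consPerm_iff, not_lt_of_ge (Fin.le_last _)]

theorem card_perm_startingWith (P : Perm (Fin (m + 1)) → Prop) (a : Fin (m + 1)) :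
    Nat.card {π : Perm (Fin (m + 1)) // P π ∧ π 0 = a} =
      Nat.card {σ : Perm (Fin m) // P (consPerm a σ)} :=
  Nat.card_congr <| (Equiv.subtypeEquivRight fun _ => and_comm).trans <|
    (Equiv.subtypeSubtypeEquivSubtypeInter (fun π => π 0 = a) P).symm.trans
      ((consPermEquiv a).subtypeEquiv fun _ => Iff.rfl).symm

theorem card_avoiders_startingWith_last :
    Nat.card {π : Perm (Fin (m + 1)) // ¬ ContainsV13sq2 (m + 1) π ∧ π 0 = Fin.last m} =
      Nat.card {σ : Perm (Fin m) // ¬ ContainsV13sq2 m σ} := by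
  simp only [card_perm_startingWith, containsV13sq2_consPerm_last_iff]

theorem card_avoiders_startingWith_eq (a : Fin (m + 1)) :
    Nat.card {π : Perm (Fin (m + 1)) // ¬ ContainsV13sq2 (m + 1) π ∧ π 0 = a} =
      Nat.card {σ : {σ : Perm (Fin m) // ¬ ContainsV13sq2 m σ} //
        ¬ ContainsV13sq2 (m + 1) (consPerm a σ)} := by
  rw [card_perm_startingWith]
  exact Nat.card_congr (Equiv.subtypeSubtypeEquivSubtype fun hσ h =>
    hσ ((containsV13sq2_consPerm_iff a _).2 (.inl h))).symm

theorem exists_avoider_consPerm_containsV13sq2 (hm : 3 ≤ m) (a : Fin (m + 1))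
    (ha : (a : ℕ) + 2 ≤ m) :
    ∃ σ : Perm (Fin m), ¬ ContainsV13sq2 m σ ∧ ContainsV13sq2 (m + 1) (consPerm a σ) := by
  -- `σ = (m-1, m-3, m-4, …, 0, m-2)` (zero-based) has no ascent early enough to start an
  -- occurrence, while in `consPerm a σ` the first, second and last letters `a, m, m-1` form one.
  let f : Fin m → Fin m := fun j =>
    ⟨if (j : ℕ) = m - 1 then m - 2 else if (j : ℕ) = 0 then m - 1 else m - 2 - j, by
      split_ifs <;> omega⟩
  have hf : f.Injective := by
    intro i j h
    simp only [f, Fin.mk.injEq] at h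
    ext
    split_ifs at h <;> omega
  refine ⟨Equiv.ofBijective f hf.bijective_of_finite, ?_, ?_⟩
  · rintro ⟨i, k, hi, hik, h1, h2⟩
    simp only [Fin.lt_def, Equiv.ofBijective_apply, f] at h1 h2
    split_ifs at h1 h2 <;> omega
  · refine (containsV13sq2_consPerm_iff a _).2
      (.inr ⟨⟨m - 1, by omega⟩, show 2 ≤ m - 1 by omega, ?_, ?_⟩)
    · simp only [Fin.lt_succAbove_iff_le_castSucc, Fin.le_def, Fin.val_castSucc,
        Equiv.ofBijective_apply, f]
      split_ifs <;> omega
    · simp only [Fin.lt_def, Equiv.ofBijective_apply, f]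
      split_ifs <;> omega

theorem card_avoiders_startingWith_lt (hm : 3 ≤ m) (a : Fin (m + 1)) (ha : (a : ℕ) + 2 ≤ m) :
    Nat.card {π : Perm (Fin (m + 1)) // ¬ ContainsV13sq2 (m + 1) π ∧ π 0 = a} <
      Nat.card {σ : Perm (Fin m) // ¬ ContainsV13sq2 m σ} := by
  obtain ⟨σ, hσ, hcons⟩ := exists_avoider_consPerm_containsV13sq2 hm a ha
  rw [card_avoiders_startingWith_eq]
  exact Finite.card_subtype_lt (x := ⟨σ, hσ⟩) (not_not.2 hcons)

theorem card_avoiders_startingWith_le (a : Fin (m + 1)) :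
    Nat.card {π : Perm (Fin (m + 1)) // ¬ ContainsV13sq2 (m + 1) π ∧ π 0 = a} ≤
      Nat.card {σ : Perm (Fin m) // ¬ ContainsV13sq2 m σ} := by
  rw [card_avoiders_startingWith_eq]
  exact Finite.card_subtype_le _

end Counting

/-- For `n ≥ 4` and `1 ≤ i ≤ n - 1` (one-based value `i`, i.e. zero-based `i - 1`):
the number of `13□2`-avoiders of `[n]` starting with `i` is at most the number of
those starting with `n`, which equals `|Av_{n-1}(13□2)|`; the inequality is strict
when `i ≤ n - 2`. -/
theorem stmt13 (n i : ℕ) (hn : 4 ≤ n) (hi2 : i ≤ n - 1) :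
    (Nat.card {π : Equiv.Perm (Fin n) //
        ¬ ContainsV13sq2 n π ∧ (π ⟨0, by omega⟩ : ℕ) = i - 1} ≤
      Nat.card {π : Equiv.Perm (Fin n) //
        ¬ ContainsV13sq2 n π ∧ (π ⟨0, by omega⟩ : ℕ) = n - 1}) ∧
    (Nat.card {π : Equiv.Perm (Fin n) //
        ¬ ContainsV13sq2 n π ∧ (π ⟨0, by omega⟩ : ℕ) = n - 1} =
      Nat.card {π : Equiv.Perm (Fin (n - 1)) // ¬ ContainsV13sq2 (n - 1) π}) ∧
    (i ≤ n - 2 →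
      Nat.card {π : Equiv.Perm (Fin n) //
          ¬ ContainsV13sq2 n π ∧ (π ⟨0, by omega⟩ : ℕ) = i - 1} <
        Nat.card {π : Equiv.Perm (Fin n) //
          ¬ ContainsV13sq2 n π ∧ (π ⟨0, by omega⟩ : ℕ) = n - 1}) := by
  obtain ⟨m, rfl⟩ : ∃ m, n = m + 1 := ⟨n - 1, by omega⟩
  have hstart (a : Fin (m + 1)) :
      Nat.card {π : Perm (Fin (m + 1)) //
          ¬ ContainsV13sq2 (m + 1) π ∧ (π ⟨0, by omega⟩ : ℕ) = a} =
        Nat.card {π : Perm (Fin (m + 1)) // ¬ ContainsV13sq2 (m + 1) π ∧ π 0 = a} :=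
    Nat.card_congr <| Equiv.subtypeEquivRight fun π => by rw [Fin.zero_eta, Fin.val_inj]
  have hfirst := hstart ⟨i - 1, by omega⟩
  have hlast := hstart (Fin.last m)
  simp only [Fin.val_last, Nat.add_sub_cancel] at hlast ⊢
  rw [hfirst, hlast, card_avoiders_startingWith_last]
  exact ⟨card_avoiders_startingWith_le _, rfl,
    fun hi => card_avoiders_startingWith_lt (by omega) _ (show i - 1 + 2 ≤ m by omega)⟩
end

section
/- The number of permutations of [n] avoiding the consecutive distant pattern 1□2 (i.e., having no index i with π_i < π_{i+2}) equals the central binomial coefficient C(n, ⌊n/2⌋). -/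
/-!
An avoider is exactly a permutation that decreases along the odd positions and along the even
positions. Such a permutation is determined by the set of values it takes at the odd positions,
since they must be placed there in decreasing order and the remaining values at the even positions
likewise; conversely every set of `⌊n/2⌋` values arises this way. So avoiders correspond to the
`⌊n/2⌋`-subsets of `[n]`.
-/

open Finset Equiv

theorem StrictAntiOn.eqOn_of_image_eq {α β : Type*} [LinearOrder α] [Preorder β] {f g : α → β}
    {s : Set α} (hs : s.Finite) (hf : StrictAntiOn f s) (hg : StrictAntiOn g s)
    (h : f '' s = g '' s) : s.EqOn f g := by
  have := hs.to_subtype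
  have hfg : f ∘ Subtype.val = g ∘ (Subtype.val : s → α) := by
    rw [← hf.strictAnti.range_inj hg.strictAnti]
    simpa only [Set.range_comp, Subtype.range_coe] using h
  exact fun x hx => congrFun hfg ⟨x, hx⟩

theorem exists_strictAnti_equiv_of_card_eq {α β : Type*} [LinearOrder α] [Fintype α]
    [LinearOrder β] [Fintype β] (h : Fintype.card α = Fintype.card β) :
    ∃ e : α ≃ β, StrictAnti e :=
  ⟨(Fintype.orderIsoFinOfCardEq α h).symm.toEquiv.trans
      (Fin.revPerm.trans (Fintype.orderIsoFinOfCardEq β rfl).toEquiv),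
    (Fintype.orderIsoFinOfCardEq β rfl).strictMono.comp_strictAnti
      (Fin.rev_strictAnti.comp_strictMono (Fintype.orderIsoFinOfCardEq α h).symm.strictMono)⟩

namespace Equiv

variable {α : Type*} {p q : α → Prop} [DecidablePred p] [DecidablePred q]
  (e : {x // p x} ≃ {x // q x}) (f : {x // ¬p x} ≃ {x // ¬q x})

theorem subtypeCongr_apply_of_pos {a : α} (h : p a) : e.subtypeCongr f a = e ⟨a, h⟩ := by
  simp [subtypeCongr, sumCompl_symm_apply_of_pos h]

theorem subtypeCongr_apply_of_neg {a : α} (h : ¬p a) : e.subtypeCongr f a = f ⟨a, h⟩ := by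
  simp [subtypeCongr, sumCompl_symm_apply_of_neg h]

end Equiv

namespace Equiv.Perm

variable {α : Type*} [LinearOrder α] [Fintype α]

theorem eq_of_strictAntiOn_of_map_eq {A : Finset α} {f g : Perm α}
    (hf : StrictAntiOn f A ∧ StrictAntiOn f (↑A)ᶜ) (hg : StrictAntiOn g A ∧ StrictAntiOn g (↑A)ᶜ)
    (h : A.map f.toEmbedding = A.map g.toEmbedding) : f = g := by
  have himage : f '' A = g '' A := by simpa using congrArg (fun t : Finset α => (t : Set α)) h
  have hcompl : f '' (↑A)ᶜ = g '' (↑A)ᶜ := by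
    rw [Set.image_compl_eq f.bijective, Set.image_compl_eq g.bijective, himage]
  ext x
  by_cases hx : x ∈ A
  · exact hf.1.eqOn_of_image_eq A.finite_toSet hg.1 himage hx
  · exact hf.2.eqOn_of_image_eq (Set.toFinite _) hg.2 hcompl hx

theorem exists_strictAntiOn_of_card_eq {A t : Finset α} (h : #A = #t) :
    ∃ f : Perm α, (StrictAntiOn f A ∧ StrictAntiOn f (↑A)ᶜ) ∧ A.map f.toEmbedding = t := by
  obtain ⟨e, he⟩ := exists_strictAnti_equiv_of_card_eq (α := {x // x ∈ A}) (β := {x // x ∈ t})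
    (by simpa using h)
  obtain ⟨e', he'⟩ := exists_strictAnti_equiv_of_card_eq (α := {x // x ∉ A}) (β := {x // x ∉ t})
    (by simp [Fintype.card_subtype_compl, h])
  refine ⟨e.subtypeCongr e', ⟨?_, ?_⟩, ?_⟩
  · intro x hx y hy hxy
    rw [subtypeCongr_apply_of_pos e e' hx, subtypeCongr_apply_of_pos e e' hy]
    exact he (Subtype.mk_lt_mk.mpr hxy)
  · intro x hx y hy hxy
    rw [subtypeCongr_apply_of_neg e e' hx, subtypeCongr_apply_of_neg e e' hy]
    exact he' (Subtype.mk_lt_mk.mpr hxy)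
  · refine eq_of_subset_of_card_le (fun y hy => ?_) (by simp [h])
    obtain ⟨x, hx, rfl⟩ := mem_map.mp hy
    simp [subtypeCongr_apply_of_pos e e' hx]

theorem card_strictAntiOn_and_strictAntiOn_compl (A : Finset α) :
    Nat.card {f : Perm α // StrictAntiOn f A ∧ StrictAntiOn f (↑A)ᶜ} =
      (Fintype.card α).choose #A := by
  rw [← Fintype.card_finset_len, ← Nat.card_eq_fintype_card]
  refine Nat.card_eq_of_bijective (fun f => ⟨A.map f.1.toEmbedding, card_map _⟩) ⟨?_, ?_⟩
  · exact fun f g h => Subtype.ext (eq_of_strictAntiOn_of_map_eq f.2 g.2 (congrArg Subtype.val h))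
  · rintro ⟨t, ht⟩
    obtain ⟨f, hf, hft⟩ := exists_strictAntiOn_of_card_eq ht.symm
    exact ⟨⟨f, hf⟩, Subtype.ext hft⟩

end Equiv.Perm

def oddPositions (n : ℕ) : Finset (Fin n) := {i | (i : ℕ) % 2 = 1}

@[simp]
theorem mem_oddPositions {n : ℕ} {i : Fin n} : i ∈ oddPositions n ↔ (i : ℕ) % 2 = 1 := by
  simp [oddPositions]

theorem card_oddPositions (n : ℕ) : #(oddPositions n) = n / 2 := by
  have hmap : (oddPositions n).map Fin.valEmbedding = {e ∈ range n | 2 ∣ e + 1} := by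
    ext e
    simp only [mem_map, mem_oddPositions, Fin.valEmbedding_apply, mem_filter, mem_range,
      Nat.dvd_iff_mod_eq_zero]
    constructor
    · rintro ⟨a, ha, rfl⟩
      omega
    · exact fun h => ⟨⟨e, h.1⟩, show e % 2 = 1 by omega, rfl⟩
  rw [← Nat.card_multiples n 2, ← hmap, card_map]

theorem Fin.apply_lt_of_apply_add_two_lt {n : ℕ} {β : Type*} [Preorder β] {f : Fin n → β}
    (hf : ∀ i : Fin n, ∀ h : (i : ℕ) + 2 < n, f ⟨i + 2, h⟩ < f i) {i j : Fin n} (hij : i < j)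
    (hpar : (i : ℕ) % 2 = (j : ℕ) % 2) : f j < f i := by
  obtain ⟨j, hj⟩ := j
  rw [Fin.lt_def] at hij
  dsimp only at hij hpar
  induction j using Nat.strong_induction_on with
  | _ j ih =>
    have hstep : f ⟨j, hj⟩ < f ⟨j - 2, by omega⟩ := by
      convert hf ⟨j - 2, by omega⟩ (by dsimp only; omega) using 3
      dsimp only
      omega
    rcases eq_or_lt_of_le (show (i : ℕ) ≤ j - 2 by omega) with h | h
    · rwa [show i = ⟨j - 2, by omega⟩ from Fin.ext h]
    · exact hstep.trans (ih (j - 2) (by omega) (by omega) h (by omega))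

theorem avoids_iff_strictAntiOn_oddPositions {n : ℕ} (π : Perm (Fin n)) :
    (∀ i : Fin n, ∀ h : (i : ℕ) + 2 < n, ¬ π i < π ⟨(i : ℕ) + 2, h⟩) ↔
      StrictAntiOn π (oddPositions n) ∧ StrictAntiOn π (↑(oddPositions n))ᶜ := by
  constructor
  · intro h
    have hstep : ∀ i : Fin n, ∀ h : (i : ℕ) + 2 < n, π ⟨i + 2, h⟩ < π i := fun i hi =>
      lt_of_le_of_ne (not_lt.mp (h i hi)) (π.injective.ne (by simp [Fin.ext_iff]))
    refine ⟨fun i hi j hj hij => ?_, fun i hi j hj hij => ?_⟩ <;>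
      simp only [Set.mem_compl_iff, mem_coe, mem_oddPositions] at hi hj <;>
      exact Fin.apply_lt_of_apply_add_two_lt hstep hij (by omega)
  · rintro ⟨hodd, heven⟩ i hi
    have hlt : i < ⟨i + 2, hi⟩ := Fin.lt_def.mpr (by simp)
    by_cases hpar : (i : ℕ) % 2 = 1
    · exact (hodd (mem_oddPositions.mpr hpar)
        (mem_oddPositions.mpr (show ((i : ℕ) + 2) % 2 = 1 by omega)) hlt).not_gt
    · exact (heven (mt mem_oddPositions.mp hpar)
        (mt mem_oddPositions.mp (show ¬((i : ℕ) + 2) % 2 = 1 by omega)) hlt).not_gt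

/-- The number of permutations of `[n]` avoiding the consecutive distant pattern
`1□2` (no index `i` with `π i < π (i+2)`) is the central binomial coefficient
`C(n, ⌊n/2⌋)`. -/
theorem stmt14 (n : ℕ) :
    Nat.card {π : Equiv.Perm (Fin n) //
        ∀ i : Fin n, ∀ h : (i : ℕ) + 2 < n, ¬ π i < π ⟨(i : ℕ) + 2, h⟩} =
      Nat.choose n (n / 2) := by
  calc _ = Nat.card {π : Perm (Fin n) //
          StrictAntiOn π (oddPositions n) ∧ StrictAntiOn π (↑(oddPositions n))ᶜ} :=
        Nat.card_congr (subtypeEquivRight avoids_iff_strictAntiOn_oddPositions)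
    _ = n.choose (n / 2) := by
      rw [Perm.card_strictAntiOn_and_strictAntiOn_compl, Fintype.card_fin, card_oddPositions]
end

section
/- For a classical pattern q of size k, distance r ≥ 0 and n with l = ⌊n/(r+1)⌋ and u = n mod (r+1), the number of permutations of [n] avoiding the consecutive distant pattern dist_r(q) with all gaps exactly r equals n!/(l!^{r+1-u}·(l+1)!^{u}) · |Av_l(underline q)|^{r+1-u} · |Av_{l+1}(underline q)|^{u}, where Av_m(underline q) is the set of m-permutations avoiding q as a consecutive pattern. -/
/-- `π` contains the consecutive distant pattern `dist_r(q)` with all gaps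
exactly `r`: at some position `i`, the letters `π i, π (i+r+1), …,
π (i+(k-1)(r+1))` are order-isomorphic to `q`.  Taking `r = 0` gives ordinary
consecutive pattern containment. -/
def ContainsTight {n k : ℕ} (π : Equiv.Perm (Fin n)) (q : Fin k → Fin k)
    (r : ℕ) : Prop :=
  ∃ i : ℕ, ∃ h : i + (k - 1) * (r + 1) < n,
    ∀ a b : Fin k,
      (π ⟨i + (a : ℕ) * (r + 1), by
          have ha : (a : ℕ) * (r + 1) ≤ (k - 1) * (r + 1) :=
            Nat.mul_le_mul_right _ (Nat.le_pred_of_lt a.isLt)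
          omega⟩ <
        π ⟨i + (b : ℕ) * (r + 1), by
          have hb : (b : ℕ) * (r + 1) ≤ (k - 1) * (r + 1) :=
            Nat.mul_le_mul_right _ (Nat.le_pred_of_lt b.isLt)
          omega⟩) ↔ q a < q b

/-!
Split the positions `0, …, n - 1` into their residue classes modulo `r + 1`; the class of `j`
has `classSize r n j` elements, namely `⌊n/(r+1)⌋ + 1` if `j < n mod (r+1)` and `⌊n/(r+1)⌋`
otherwise. A tight occurrence of `dist_r(q)` lies inside one class, so `π` avoids it iff the
standardization of `π` along every class avoids `q` consecutively.

The group `∏ⱼ S_{n_j}` acts freely on `S_n` by permuting positions inside the classes, and the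
tuple of class standardizations is equivariant. Hence `S_n` is in bijection with
(permutations increasing along every class) × `∏ⱼ S_{n_j}`, and the avoiders with the same set
times `∏ⱼ Av_{n_j}(q)`. Comparing the two counts eliminates the multinomial `n!/∏ⱼ n_j!`.
-/

open Equiv Function

section FiberProduct

variable {G H : Type*} [Group G] [Group H]

def subtypeFiberProdEquiv (φ : G →* H) (P : H → G) (hP : ∀ h g, P (h * φ g) = P h * g)
    (A : G → Prop) : {h // P h = 1} × {g // A g} ≃ {h // A (P h)} where
  toFun x := ⟨x.1.1 * φ x.2.1, by rw [hP, x.1.2, one_mul]; exact x.2.2⟩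
  invFun h := (⟨h.1 * φ (P h.1)⁻¹, by rw [hP, mul_inv_cancel]⟩, ⟨P h.1, h.2⟩)
  left_inv := by
    rintro ⟨⟨h, hh⟩, g, -⟩
    have hg : P (h * φ g) = g := by rw [hP, hh, one_mul]
    ext <;> simp only [hg, map_inv, mul_inv_cancel_right]
  right_inv := by
    rintro ⟨h, -⟩
    ext
    simp only [map_inv, inv_mul_cancel_right]

theorem natCard_subtype_comp_eq_mul (φ : G →* H) (P : H → G)
    (hP : ∀ h g, P (h * φ g) = P h * g) (A : G → Prop) :
    Nat.card {h // A (P h)} = Nat.card {h // P h = 1} * Nat.card {g // A g} := by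
  rw [← Nat.card_prod, Nat.card_congr (subtypeFiberProdEquiv φ P hP A)]

end FiberProduct

namespace DistantPattern

def classSize (r n : ℕ) (j : Fin (r + 1)) : ℕ :=
  if (j : ℕ) < n % (r + 1) then n / (r + 1) + 1 else n / (r + 1)

theorem lt_classSize_iff {r n : ℕ} (j : Fin (r + 1)) (t : ℕ) :
    (j : ℕ) + t * (r + 1) < n ↔ t < classSize r n j := by
  have hn := Nat.div_add_mod' n (r + 1)
  have hu : n % (r + 1) < r + 1 := Nat.mod_lt n (by omega)
  have hj := j.isLt
  unfold classSize
  rcases lt_trichotomy t (n / (r + 1)) with ht | ht | ht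
  · have : (t + 1) * (r + 1) ≤ n / (r + 1) * (r + 1) := Nat.mul_le_mul_right _ ht
    rw [add_one_mul] at this
    split_ifs <;> omega
  · subst ht
    split_ifs <;> omega
  · have : (n / (r + 1) + 1) * (r + 1) ≤ t * (r + 1) := Nat.mul_le_mul_right _ ht
    rw [add_one_mul] at this
    split_ifs <;> omega

theorem prod_classSize {M : Type*} [CommMonoid M] (r n : ℕ) (g : ℕ → M) :
    ∏ j, g (classSize r n j) =
      g (n / (r + 1)) ^ (r + 1 - n % (r + 1)) * g (n / (r + 1) + 1) ^ (n % (r + 1)) := by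
  have hu : n % (r + 1) ≤ r + 1 := (Nat.mod_lt _ r.succ_pos).le
  have hcard : (Finset.univ.filter fun j : Fin (r + 1) => (j : ℕ) < n % (r + 1)).card =
      n % (r + 1) := by
    rw [Fin.card_filter_val_lt, min_eq_right hu]
  simp only [classSize, apply_ite g]
  rw [Finset.prod_ite, Finset.prod_const, Finset.prod_const, hcard,
    Finset.filter_not, Finset.card_sdiff_of_subset (Finset.filter_subset _ _), hcard,
    Finset.card_univ, Fintype.card_fin, mul_comm]

def residueEquiv (r n : ℕ) : (Σ j, Fin (classSize r n j)) ≃ Fin n where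
  toFun x := ⟨(x.1 : ℕ) + (x.2 : ℕ) * (r + 1), (lt_classSize_iff x.1 x.2).2 x.2.isLt⟩
  invFun i := ⟨⟨(i : ℕ) % (r + 1), Nat.mod_lt _ r.succ_pos⟩, ⟨(i : ℕ) / (r + 1),
    (lt_classSize_iff _ _).1 (by simpa only [Nat.mod_add_div'] using i.isLt)⟩⟩
  left_inv := by
    rintro ⟨j, t⟩
    have hmod : ((j : ℕ) + (t : ℕ) * (r + 1)) % (r + 1) = j := by
      rw [Nat.add_mul_mod_self_right, Nat.mod_eq_of_lt j.isLt]
    have hdiv : ((j : ℕ) + (t : ℕ) * (r + 1)) / (r + 1) = t := by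
      rw [Nat.add_mul_div_right _ _ r.succ_pos, Nat.div_eq_of_lt j.isLt, zero_add]
    exact Sigma.ext (Fin.ext hmod) ((Fin.heq_ext_iff (congrArg _ (Fin.ext hmod))).2 hdiv)
  right_inv i := Fin.ext (Nat.mod_add_div' i (r + 1))

def classPerm (r n : ℕ) : (∀ j, Perm (Fin (classSize r n j))) →* Perm (Fin n) :=
  (residueEquiv r n).permCongrHom.toMonoidHom.comp (Perm.sigmaCongrRightHom _)

theorem classPerm_apply_residueEquiv {r n : ℕ} (σ : ∀ j, Perm (Fin (classSize r n j)))
    (j : Fin (r + 1)) (t : Fin (classSize r n j)) :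
    classPerm r n σ (residueEquiv r n ⟨j, t⟩) = residueEquiv r n ⟨j, σ j t⟩ := by
  simp [classPerm, Equiv.permCongrHom_coe, Equiv.permCongr_apply]

def std {N M : ℕ} (w : Fin N → Fin M) : Perm (Fin N) := (Tuple.sort w)⁻¹

section Standardization

variable {N M : ℕ} {w : Fin N → Fin M}

theorem std_lt_std_iff (hw : Injective w) (a b : Fin N) : std w a < std w b ↔ w a < w b := by
  have hmono : StrictMono (w ∘ Tuple.sort w) := (Tuple.monotone_sort w).strictMono_of_injective
    (hw.comp (Tuple.sort w).injective)
  simpa [std] using (hmono.lt_iff_lt (a := (Tuple.sort w)⁻¹ a) (b := (Tuple.sort w)⁻¹ b)).symm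

theorem std_comp_perm (hw : Injective w) (σ : Perm (Fin N)) : std (w ∘ σ) = std w * σ := by
  have hsort : Tuple.sort (w ∘ σ) = σ⁻¹ * Tuple.sort w := by
    refine (Tuple.eq_sort_iff.2 ⟨?_, fun i j hij hij' => ?_⟩).symm
    · convert Tuple.monotone_sort w using 1
      ext
      simp
    · exact absurd ((σ⁻¹ * Tuple.sort w).injective (σ.injective (hw hij'))) hij.ne
  rw [std, hsort, mul_inv_rev, inv_inv, std]

end Standardization

def classWord {r n : ℕ} (π : Perm (Fin n)) (j : Fin (r + 1)) : Fin (classSize r n j) → Fin n :=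
  fun t => π (residueEquiv r n ⟨j, t⟩)

def classPattern {r n : ℕ} (π : Perm (Fin n)) : ∀ j, Perm (Fin (classSize r n j)) :=
  fun j => std (classWord π j)

theorem classWord_injective {r n : ℕ} (π : Perm (Fin n)) (j : Fin (r + 1)) :
    Injective (classWord π j) :=
  π.injective.comp ((residueEquiv r n).injective.comp sigma_mk_injective)

theorem classPattern_mul_classPerm {r n : ℕ} (π : Perm (Fin n))
    (σ : ∀ j, Perm (Fin (classSize r n j))) :
    classPattern (π * classPerm r n σ) = classPattern π * σ := by
  funext j
  have hword : classWord (π * classPerm r n σ) j = classWord π j ∘ σ j := by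
    funext t
    simp only [classWord, Perm.mul_apply, classPerm_apply_residueEquiv, comp_apply]
  rw [classPattern, hword, std_comp_perm (classWord_injective π j)]
  rfl

/-- Junk value `0` outside `Fin N`; `OccursAt` is only ever applied within range. -/
def toNatFun {N M : ℕ} (w : Fin N → Fin M) (t : ℕ) : ℕ := if h : t < N then w ⟨t, h⟩ else 0

theorem toNatFun_of_lt {N M : ℕ} (w : Fin N → Fin M) {t : ℕ} (h : t < N) :
    toNatFun w t = w ⟨t, h⟩ :=
  dif_pos h

def OccursAt {k : ℕ} (f : ℕ → ℕ) (q : Fin k → Fin k) (i s : ℕ) : Prop :=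
  ∀ a b : Fin k, f (i + a * s) < f (i + b * s) ↔ q a < q b

theorem add_val_mul_lt {k i s N : ℕ} (a : Fin k) (h : i + (k - 1) * s < N) : i + a * s < N :=
  lt_of_le_of_lt (Nat.add_le_add_left (Nat.mul_le_mul_right _ (Nat.le_pred_of_lt a.isLt)) _) h

theorem containsTight_iff_exists_occursAt {n k : ℕ} (π : Perm (Fin n)) (q : Fin k → Fin k)
    (r : ℕ) : ContainsTight π q r ↔
      ∃ i, i + (k - 1) * (r + 1) < n ∧ OccursAt (toNatFun π) q i (r + 1) := by
  refine exists_congr fun i =>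
    ⟨fun ⟨h, hq⟩ => ⟨h, fun a b => ?_⟩, fun ⟨h, hq⟩ => ⟨h, fun a b => ?_⟩⟩
  · rw [toNatFun_of_lt _ (add_val_mul_lt a h), toNatFun_of_lt _ (add_val_mul_lt b h),
      Fin.val_fin_lt, hq]
  · rw [← hq, toNatFun_of_lt _ (add_val_mul_lt a h), toNatFun_of_lt _ (add_val_mul_lt b h),
      Fin.val_fin_lt]

theorem occursAt_std_iff {N M k : ℕ} {w : Fin N → Fin M} (hw : Injective w) (q : Fin k → Fin k)
    {i s : ℕ} (h : i + (k - 1) * s < N) :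
    OccursAt (toNatFun (std w)) q i s ↔ OccursAt (toNatFun w) q i s := by
  refine forall₂_congr fun a b => ?_
  rw [toNatFun_of_lt _ (add_val_mul_lt a h), toNatFun_of_lt _ (add_val_mul_lt b h),
    toNatFun_of_lt _ (add_val_mul_lt a h), toNatFun_of_lt _ (add_val_mul_lt b h),
    Fin.val_fin_lt, Fin.val_fin_lt, std_lt_std_iff hw]

theorem toNatFun_classWord {r n : ℕ} (π : Perm (Fin n)) (j : Fin (r + 1)) (t : ℕ) :
    toNatFun (classWord π j) t = toNatFun π (j + t * (r + 1)) := by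
  by_cases ht : t < classSize r n j
  · rw [toNatFun_of_lt _ ht, toNatFun_of_lt _ ((lt_classSize_iff j t).2 ht)]
    rfl
  · simp only [toNatFun, dif_neg ht, dif_neg (mt (lt_classSize_iff j t).1 ht)]

theorem occursAt_classWord_iff {r n k : ℕ} (π : Perm (Fin n)) (q : Fin k → Fin k)
    (j : Fin (r + 1)) (d : ℕ) :
    OccursAt (toNatFun (classWord π j)) q d 1 ↔
      OccursAt (toNatFun π) q (j + d * (r + 1)) (r + 1) := by
  simp only [OccursAt, toNatFun_classWord, mul_one, add_mul, add_assoc]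

theorem exists_residue_iff {r : ℕ} (F : ℕ → Prop) :
    (∃ j : Fin (r + 1), ∃ d, F (j + d * (r + 1))) ↔ ∃ i, F i :=
  ⟨fun ⟨_, _, h⟩ => ⟨_, h⟩, fun ⟨i, h⟩ =>
    ⟨⟨i % (r + 1), Nat.mod_lt _ r.succ_pos⟩, i / (r + 1), by rwa [Nat.mod_add_div']⟩⟩

theorem containsTight_iff_exists_classPattern {r n k : ℕ} (π : Perm (Fin n))
    (q : Fin k → Fin k) :
    ContainsTight π q r ↔ ∃ j : Fin (r + 1), ContainsTight (classPattern π j) q 0 := by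
  simp only [containsTight_iff_exists_occursAt, zero_add, mul_one]
  rw [← exists_residue_iff]
  refine exists_congr fun j => exists_congr fun d => ?_
  rw [← occursAt_classWord_iff, add_assoc, ← add_mul, lt_classSize_iff]
  exact and_congr_right fun h =>
    (occursAt_std_iff (classWord_injective π j) q (by rwa [mul_one])).symm

theorem natCard_avoiding_eq (r n k : ℕ) (q : Fin k → Fin k) :
    Nat.card {π : Perm (Fin n) // ¬ ContainsTight π q r} =
      Nat.card {π : Perm (Fin n) // classPattern (r := r) π = 1} *
        ∏ j, Nat.card {p : Perm (Fin (classSize r n j)) // ¬ ContainsTight p q 0} := by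
  have hsplit : {π : Perm (Fin n) // ¬ ContainsTight π q r} ≃
      {π : Perm (Fin n) // ∀ j, ¬ ContainsTight (classPattern (r := r) π j) q 0} :=
    Equiv.subtypeEquivRight fun π => by
      rw [containsTight_iff_exists_classPattern, not_exists]
  rw [Nat.card_congr hsplit, natCard_subtype_comp_eq_mul (classPerm r n) classPattern
    classPattern_mul_classPerm (fun g => ∀ j, ¬ ContainsTight (g j) q 0),
    Nat.card_congr (Equiv.subtypePiEquivPi (p := fun _ p => ¬ ContainsTight p q 0)),
    Nat.card_pi]

theorem factorial_eq_natCard_mul (r n : ℕ) :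
    n.factorial = Nat.card {π : Perm (Fin n) // classPattern (r := r) π = 1} *
      ∏ j, (classSize r n j).factorial := by
  have h := natCard_subtype_comp_eq_mul (classPerm r n) classPattern
    classPattern_mul_classPerm (fun _ => True)
  simpa only [Nat.card_congr (Equiv.subtypeUnivEquiv fun _ => trivial), Nat.card_pi,
    Nat.card_perm, Nat.card_fin] using h

end DistantPattern

open DistantPattern

theorem stmt15_general (k r n : ℕ) (q : Fin k → Fin k) :
    Nat.card {π : Equiv.Perm (Fin n) // ¬ ContainsTight π q r} *
        ((n / (r + 1)).factorial ^ (r + 1 - n % (r + 1)) *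
          (n / (r + 1) + 1).factorial ^ (n % (r + 1))) =
      n.factorial *
        (Nat.card {π : Equiv.Perm (Fin (n / (r + 1))) // ¬ ContainsTight π q 0}) ^
          (r + 1 - n % (r + 1)) *
        (Nat.card {π : Equiv.Perm (Fin (n / (r + 1) + 1)) // ¬ ContainsTight π q 0}) ^
          (n % (r + 1)) := by
  rw [natCard_avoiding_eq r n k q, factorial_eq_natCard_mul r n,
    prod_classSize r n fun m => Nat.card {p : Perm (Fin m) // ¬ ContainsTight p q 0},
    prod_classSize r n Nat.factorial]
  ring

/-- With `l = ⌊n/(r+1)⌋` and `u = n mod (r+1)`,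
`|Av_n(dist_r(q), tight gaps)| = n!/(l!^{r+1-u} (l+1)!^u)
  ⬝ |Av_l(q consecutive)|^{r+1-u} ⬝ |Av_{l+1}(q consecutive)|^u`
(stated in cross-multiplied form). -/
theorem stmt15 (k r n : ℕ) (hk : 1 ≤ k) (q : Fin k → Fin k) :
    Nat.card {π : Equiv.Perm (Fin n) // ¬ ContainsTight π q r} *
        ((n / (r + 1)).factorial ^ (r + 1 - n % (r + 1)) *
          (n / (r + 1) + 1).factorial ^ (n % (r + 1))) =
      n.factorial *
        (Nat.card {π : Equiv.Perm (Fin (n / (r + 1))) // ¬ ContainsTight π q 0}) ^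
          (r + 1 - n % (r + 1)) *
        (Nat.card {π : Equiv.Perm (Fin (n / (r + 1) + 1)) // ¬ ContainsTight π q 0}) ^
          (n % (r + 1)) :=
  stmt15_general k r n q
end

section
/- Let Π = {2431, 2143, 3142, 4132, 1432, 1342, 1324, 1423, 1243}. For n ≥ 4, the permutations of [n] avoiding all patterns in Π are exactly the 132-avoiding permutations together with the permutations of the form (n-2) n α (n-1) where α is a 132-avoiding permutation of {1, ..., n-3}. Consequently |Av_n(Π)| = Cat(n) + Cat(n-3), where Cat(m) is the m-th Catalan number. -/
/-- Classical pattern containment: `π` has a subsequence order-isomorphic to `q`. -/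
def ContainsPat {n k : ℕ} (π : Equiv.Perm (Fin n)) (q : Fin k → Fin k) : Prop :=
  ∃ idx : Fin k → Fin n, StrictMono idx ∧
    ∀ a b : Fin k, π (idx a) < π (idx b) ↔ q a < q b

/-- The set `Π = {2431, 2143, 3142, 4132, 1432, 1342, 1324, 1423, 1243}`
(zero-based one-line notation). -/
def Pi17 : List (Fin 4 → Fin 4) :=
  [![1,3,2,0], ![1,0,3,2], ![2,0,3,1], ![3,0,2,1], ![0,3,2,1],
   ![0,2,3,1], ![0,2,1,3], ![0,3,1,2], ![0,1,3,2]]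

/-!
Let `(i, j, k)` be a 132-occurrence of a permutation `π` avoiding `Π`. Every fourth entry placed
before `i`, after `k`, or between `i` and `k` with value above `π i` completes a pattern of `Π`.
Hence `i` and `k` are the first and last positions and all other entries lie below `π i`, so
`π j, π k, π i` are `n, n - 1, n - 2`. Moreover `j` is the second position: otherwise the entry
in position 2 lies below `π i` and `(2, j, k)` is an occurrence not starting at the first
position. For the same reason the middle block `α` avoids 132. Conversely, the only
132-occurrence of `(n-2) n α (n-1)` sits at its first, second and last positions, while every
pattern of `Π` has an occurrence elsewhere.

The count then reduces to `|Av_m(132)| = Cat(m)`: split a 132-avoider at its maximum; the entries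
left of the maximum all exceed those to its right, and both blocks avoid 132, which is exactly
the Catalan recurrence.
-/

open Equiv Function Finset

namespace Av132

section General

variable {α β γ : Type*}

def IsOcc132 [LT α] [LT β] (f : α → β) (i j k : α) : Prop :=
  i < j ∧ j < k ∧ f i < f k ∧ f k < f j

def Has132 [LT α] [LT β] (f : α → β) : Prop :=
  ∃ i j k, IsOcc132 f i j k

instance [LT α] [LT β] [DecidableRel (α := α) (· < ·)] [DecidableRel (α := β) (· < ·)]
    (f : α → β) (i j k : α) : Decidable (IsOcc132 f i j k) := by
  unfold IsOcc132; infer_instance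

theorem IsOcc132.comp_of_strictMono [Preorder α] [Preorder γ] [LT β] {f : α → β}
    {e : γ → α} (he : StrictMono e) {i j k : γ} (h : IsOcc132 (f ∘ e) i j k) :
    IsOcc132 f (e i) (e j) (e k) :=
  ⟨he h.1, he h.2.1, h.2.2⟩

theorem has132_comp_iff [LT α] [LinearOrder β] [Preorder γ] {g : β → γ} (hg : StrictMono g)
    {f : α → β} : Has132 (g ∘ f) ↔ Has132 f := by
  simp only [Has132, IsOcc132, comp_apply, hg.lt_iff_lt]

theorem isOcc132_congr [LT α] [LT β] [LT γ] {f : α → β} {g : α → γ}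
    (h : ∀ a b, f a < f b ↔ g a < g b) {i j k : α} :
    IsOcc132 f i j k ↔ IsOcc132 g i j k := by
  simp only [IsOcc132, h]

end General

theorem card_filter_lt {n : ℕ} (π : Perm (Fin n)) (x : Fin n) : #{l | π l < π x} = π x := by
  rw [← Fin.card_Iio]
  exact card_equiv π (by simp)

theorem card_filter_gt {n : ℕ} (π : Perm (Fin n)) (x : Fin n) :
    #{l | π x < π l} = n - 1 - π x := by
  rw [← Fin.card_Ioi]
  exact card_equiv π (by simp)

section Shift

variable {a N : ℕ}

def shift (d : ℕ) (h : a + d ≤ N) (t : Fin a) : Fin N := ⟨t + d, by omega⟩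

@[simp] theorem val_shift {d : ℕ} {h : a + d ≤ N} (t : Fin a) : (shift d h t : ℕ) = t + d :=
  rfl

theorem strictMono_shift (d : ℕ) (h : a + d ≤ N) : StrictMono (shift d h) := fun _ _ hst =>
  Nat.add_lt_add_right hst d

theorem exists_shift_eq_iff {d : ℕ} {h : a + d ≤ N} {x : Fin N} :
    (∃ t, shift d h t = x) ↔ d ≤ x ∧ (x : ℕ) < a + d := by
  constructor
  · rintro ⟨t, rfl⟩
    simp
  · intro hx
    exact ⟨⟨x - d, by omega⟩, Fin.ext (by simp; omega)⟩

theorem has132_comp_shift_iff {β : Type*} [LT β] {f : Fin N → β} {d : ℕ} {h : a + d ≤ N} :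
    Has132 (f ∘ shift d h) ↔
      ∃ i j k : Fin N, d ≤ (i : ℕ) ∧ (k : ℕ) < a + d ∧ IsOcc132 f i j k := by
  constructor
  · rintro ⟨i, j, k, hocc⟩
    refine ⟨_, _, _, by simp, by simp, hocc.comp_of_strictMono (strictMono_shift d h)⟩
  · rintro ⟨i, j, k, hi, hk, hij, hjk, hocc⟩
    simp only [Fin.lt_def] at hij hjk
    obtain ⟨i', rfl⟩ := (exists_shift_eq_iff (h := h) (x := i)).mpr ⟨hi, by omega⟩
    obtain ⟨j', rfl⟩ := (exists_shift_eq_iff (h := h) (x := j)).mpr ⟨by omega, by omega⟩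
    obtain ⟨k', rfl⟩ := (exists_shift_eq_iff (h := h) (x := k)).mpr ⟨by omega, hk⟩
    exact ⟨i', j', k', (strictMono_shift d h).lt_iff_lt.mp (Fin.lt_def.mpr hij),
      (strictMono_shift d h).lt_iff_lt.mp (Fin.lt_def.mpr hjk), hocc⟩

theorem exists_perm_restrict (π : Perm (Fin N)) {d d' : ℕ} (h : a + d ≤ N) (h' : a + d' ≤ N)
    (hπ : ∀ t, d' ≤ (π (shift d h t) : ℕ) ∧ (π (shift d h t) : ℕ) < a + d') :
    ∃ σ : Perm (Fin a), shift d' h' ∘ σ = π ∘ shift d h := by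
  choose σ hσ using fun t => (exists_shift_eq_iff (h := h')).mpr (hπ t)
  have hinj : Injective σ := fun s t hst =>
    (strictMono_shift d h).injective (π.injective (by rw [← hσ, ← hσ, hst]))
  exact ⟨Equiv.ofBijective σ (Finite.injective_iff_bijective.mp hinj), funext hσ⟩

end Shift

section Containment

variable {n : ℕ} {π : Perm (Fin n)}

theorem _root_.ContainsPat.isOcc132 {k : ℕ} {p : Fin k → Fin k} (h : ContainsPat π p) :
    ∃ idx : Fin k → Fin n, StrictMono idx ∧
      ∀ {a b c}, IsOcc132 p a b c → IsOcc132 π (idx a) (idx b) (idx c) := by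
  obtain ⟨idx, hidx, hiff⟩ := h
  exact ⟨idx, hidx, fun hp => ((isOcc132_congr hiff).mpr hp).comp_of_strictMono hidx⟩

-- `s` lists the indices of `p` in order of increasing value, i.e. `s = p⁻¹`.
theorem containsPat_of_strictMono {k : ℕ} {p s : Fin k → Fin k} (hs : ∀ a, s (p a) = a)
    {idx : Fin k → Fin n} (hidx : StrictMono idx) (hsorted : StrictMono (π ∘ idx ∘ s)) :
    ContainsPat π p := by
  refine ⟨idx, hidx, fun a b => ?_⟩
  simpa only [comp_apply, hs] using hsorted.lt_iff_lt (a := p a) (b := p b)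

theorem containsPat_021_iff : ContainsPat π ![0, 2, 1] ↔ Has132 π := by
  constructor
  · intro h
    obtain ⟨idx, -, hocc⟩ := h.isOcc132
    exact ⟨_, _, _, hocc (a := 0) (b := 1) (c := 2) (by decide)⟩
  · rintro ⟨i, j, k, hij, hjk, hik, hkj⟩
    exact containsPat_of_strictMono (s := ![0, 2, 1]) (idx := ![i, j, k]) (by decide)
      (by simp [hij, hjk]) (by simp [Fin.strictMono_iff_lt_succ, Fin.forall_fin_succ, hik, hkj])

theorem containsPat_of_sorted4 {p s : Fin 4 → Fin 4} (hs : ∀ a, s (p a) = a)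
    {q : Fin 4 → Fin n} (hq : StrictMono q) (h₀ : π (q (s 0)) < π (q (s 1)))
    (h₁ : π (q (s 1)) < π (q (s 2))) (h₂ : π (q (s 2)) < π (q (s 3))) : ContainsPat π p :=
  containsPat_of_strictMono hs hq (by simp [Fin.strictMono_iff_lt_succ, Fin.forall_fin_succ, *])

-- No pattern of `Π` has all its 132-occurrences at its first, second and last positions, the only
-- place where a special permutation has one.
set_option maxRecDepth 100000 in
theorem exists_isOcc132_of_mem_Pi17 :
    ∀ p ∈ Pi17, ∃ a b c l : Fin 4,
      IsOcc132 p a b c ∧ (l < a ∨ a < l ∧ l < b ∨ c < l) := by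
  decide

theorem has132_of_containsPat {p : Fin 4 → Fin 4} (hp : p ∈ Pi17) (h : ContainsPat π p) :
    Has132 π := by
  obtain ⟨a, b, c, -, hocc, -⟩ := exists_isOcc132_of_mem_Pi17 p hp
  obtain ⟨idx, -, hidx⟩ := h.isOcc132
  exact ⟨_, _, _, hidx hocc⟩

end Containment

section Structure

variable {n : ℕ} {π : Perm (Fin n)}

theorem IsOcc132.left_le_of_avoids (hav : ∀ p ∈ Pi17, ¬ ContainsPat π p) {i j k : Fin n}
    (h : IsOcc132 π i j k) (l : Fin n) : i ≤ l := by
  obtain ⟨hij, hjk, hik, hkj⟩ := h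
  by_contra! hl
  have hq : StrictMono ![l, i, j, k] := by simp [*]
  rcases (π.injective.ne hl.ne).lt_or_gt with h₁ | h₁
  · exact hav ![0, 1, 3, 2] (by decide)
      (containsPat_of_sorted4 (s := ![0, 1, 3, 2]) (by decide) hq h₁ hik hkj)
  rcases (π.injective.ne (hl.trans (hij.trans hjk)).ne).lt_or_gt with h₂ | h₂
  · exact hav ![1, 0, 3, 2] (by decide)
      (containsPat_of_sorted4 (s := ![1, 0, 3, 2]) (by decide) hq h₁ h₂ hkj)
  rcases (π.injective.ne (hl.trans hij).ne).lt_or_gt with h₃ | h₃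
  · exact hav ![2, 0, 3, 1] (by decide)
      (containsPat_of_sorted4 (s := ![1, 3, 0, 2]) (by decide) hq hik h₂ h₃)
  · exact hav ![3, 0, 2, 1] (by decide)
      (containsPat_of_sorted4 (s := ![1, 3, 2, 0]) (by decide) hq hik hkj h₃)

theorem IsOcc132.le_right_of_avoids (hav : ∀ p ∈ Pi17, ¬ ContainsPat π p) {i j k : Fin n}
    (h : IsOcc132 π i j k) (l : Fin n) : l ≤ k := by
  obtain ⟨hij, hjk, hik, hkj⟩ := h
  by_contra! hl
  have hq : StrictMono ![i, j, k, l] := by simp [*]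
  rcases (π.injective.ne (hij.trans (hjk.trans hl)).ne').lt_or_gt with h₁ | h₁
  · exact hav ![1, 3, 2, 0] (by decide)
      (containsPat_of_sorted4 (s := ![3, 0, 2, 1]) (by decide) hq h₁ hik hkj)
  rcases (π.injective.ne hl.ne').lt_or_gt with h₂ | h₂
  · exact hav ![0, 3, 2, 1] (by decide)
      (containsPat_of_sorted4 (s := ![0, 3, 2, 1]) (by decide) hq h₁ h₂ hkj)
  rcases (π.injective.ne (hjk.trans hl).ne').lt_or_gt with h₃ | h₃
  · exact hav ![0, 3, 1, 2] (by decide)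
      (containsPat_of_sorted4 (s := ![0, 2, 3, 1]) (by decide) hq hik h₂ h₃)
  · exact hav ![0, 2, 1, 3] (by decide)
      (containsPat_of_sorted4 (s := ![0, 2, 1, 3]) (by decide) hq hik hkj h₃)

theorem IsOcc132.apply_lt_of_avoids (hav : ∀ p ∈ Pi17, ¬ ContainsPat π p) {i j k l : Fin n}
    (h : IsOcc132 π i j k) (hil : i < l) (hlk : l < k) (hlj : l ≠ j) : π l < π i := by
  obtain ⟨hij, hjk, hik, hkj⟩ := h
  refine (π.injective.ne hil.ne').lt_or_gt.resolve_right fun h₁ => ?_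
  rcases hlj.lt_or_gt with hlj | hjl
  · have hq : StrictMono ![i, l, j, k] := by simp [*]
    rcases (π.injective.ne (hlj.trans hjk).ne).lt_or_gt with h₂ | h₂
    · exact hav ![0, 1, 3, 2] (by decide)
        (containsPat_of_sorted4 (s := ![0, 1, 3, 2]) (by decide) hq h₁ h₂ hkj)
    rcases (π.injective.ne hlj.ne).lt_or_gt with h₃ | h₃
    · exact hav ![0, 2, 3, 1] (by decide)
        (containsPat_of_sorted4 (s := ![0, 3, 1, 2]) (by decide) hq hik h₂ h₃)
    · exact hav ![0, 3, 2, 1] (by decide)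
        (containsPat_of_sorted4 (s := ![0, 3, 2, 1]) (by decide) hq hik hkj h₃)
  · have hq : StrictMono ![i, j, l, k] := by simp [*]
    rcases (π.injective.ne hlk.ne).lt_or_gt with h₂ | h₂
    · exact hav ![0, 3, 1, 2] (by decide)
        (containsPat_of_sorted4 (s := ![0, 2, 3, 1]) (by decide) hq h₁ h₂ hkj)
    rcases (π.injective.ne hjl.ne').lt_or_gt with h₃ | h₃
    · exact hav ![0, 3, 2, 1] (by decide)
        (containsPat_of_sorted4 (s := ![0, 3, 2, 1]) (by decide) hq hik h₂ h₃)
    · exact hav ![0, 2, 3, 1] (by decide)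
        (containsPat_of_sorted4 (s := ![0, 3, 1, 2]) (by decide) hq hik hkj h₃)

-- The paper's `(n-2) n α (n-1)`, values shifted down by one, `α` in positions `2, …, n - 2`.
def IsSpecial (hn : 4 ≤ n) (π : Perm (Fin n)) : Prop :=
  (π ⟨0, Nat.zero_lt_of_lt hn⟩ : ℕ) = n - 3 ∧
    (π ⟨1, Nat.lt_of_lt_of_le (by decide) hn⟩ : ℕ) = n - 1 ∧
    (π ⟨n - 1, Nat.sub_one_lt_of_lt hn⟩ : ℕ) = n - 2 ∧
    ∀ a b c : Fin n, 2 ≤ (a : ℕ) → a < b → b < c → (c : ℕ) ≤ n - 2 →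
      ¬ (π a < π c ∧ π c < π b)

theorem IsOcc132.val_eq_of_forall_lt {i j k : Fin n} (hocc : IsOcc132 π i j k)
    (hbelow : ∀ l, l ≠ i → l ≠ j → l ≠ k → π l < π i) :
    (π i : ℕ) = n - 3 ∧ (π j : ℕ) = n - 1 ∧ (π k : ℕ) = n - 2 := by
  obtain ⟨hij, hjk, hik, hkj⟩ := hocc
  have hcmp : ∀ l, l = i ∨ l = j ∨ l = k ∨ π l < π i := fun l => by
    by_contra! h
    exact (hbelow l h.1 h.2.1 h.2.2.1).not_ge h.2.2.2
  have hval : ∀ x s, ({l | π x < π l} : Finset _) = s → (π x : ℕ) = n - 1 - #s := by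
    intro x s hs
    have := card_filter_gt π x
    rw [hs] at this
    omega
  have hi := hval i {j, k} (ext fun l => by have := hcmp l; grind)
  have hj := hval j ∅ (ext fun l => by have := hcmp l; grind)
  have hk := hval k {j} (ext fun l => by have := hcmp l; grind)
  rw [card_pair hjk.ne] at hi
  simp only [card_empty, card_singleton] at hj hk
  omega

theorem isSpecial_of_avoids (hn : 4 ≤ n) (hav : ∀ p ∈ Pi17, ¬ ContainsPat π p)
    (h : Has132 π) : IsSpecial hn π := by
  obtain ⟨i, j, k, hocc⟩ := h
  have hfirst := hocc.left_le_of_avoids hav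
  have hlast := hocc.le_right_of_avoids hav
  have hbelow : ∀ l, l ≠ i → l ≠ j → l ≠ k → π l < π i := fun l hli hlj hlk =>
    hocc.apply_lt_of_avoids hav ((hfirst l).lt_of_ne' hli) ((hlast l).lt_of_ne hlk) hlj
  obtain ⟨hvi, hvj, hvk⟩ := hocc.val_eq_of_forall_lt hbelow
  have hi : (i : ℕ) = 0 := by simpa [Fin.le_def] using hfirst ⟨0, by omega⟩
  have hk : (k : ℕ) = n - 1 := by
    have := hlast ⟨n - 1, by omega⟩
    simp only [Fin.le_def] at this
    omega
  obtain ⟨hij, hjk, hik, hkj⟩ := hocc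
  -- Otherwise position `1` lies strictly between `i` and `j`, so it is below `π i` and starts
  -- another occurrence `(1, j, k)`, which cannot have `i = 0` to its left.
  have hj : (j : ℕ) = 1 := by
    by_contra hj
    simp only [Fin.lt_def] at hij hjk
    have hone : IsOcc132 π ⟨1, by omega⟩ j k :=
      ⟨by simp [Fin.lt_def]; omega, Fin.lt_def.mpr hjk,
        (hbelow _ (by simp [Fin.ext_iff]; omega) (by simp [Fin.ext_iff]; omega)
          (by simp [Fin.ext_iff]; omega)).trans hik, hkj⟩
    have := hone.left_le_of_avoids hav i
    simp only [Fin.le_def] at this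
    omega
  refine ⟨?_, ?_, ?_, ?_⟩
  · rwa [show (⟨0, _⟩ : Fin n) = i from Fin.ext hi.symm]
  · rwa [show (⟨1, _⟩ : Fin n) = j from Fin.ext hj.symm]
  · rwa [show (⟨n - 1, _⟩ : Fin n) = k from Fin.ext hk.symm]
  · intro a b c ha hab hbc _ habc
    have := (show IsOcc132 π a b c from ⟨hab, hbc, habc⟩).left_le_of_avoids hav i
    simp only [Fin.le_def] at this
    omega

namespace IsSpecial

variable {hn : 4 ≤ n}

theorem val_lt_iff (h : IsSpecial hn π) {l : Fin n} :
    (π l : ℕ) < n - 3 ↔ 2 ≤ (l : ℕ) ∧ (l : ℕ) ≠ n - 1 := by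
  obtain ⟨v₀, v₁, v₂, -⟩ := h
  have hval : ∀ x : Fin n, (π x : ℕ) = π l ↔ (x : ℕ) = l := fun x => by
    rw [Fin.val_inj, π.injective.eq_iff, Fin.val_inj]
  have h₀ := hval ⟨0, by omega⟩
  have h₁ := hval ⟨1, by omega⟩
  have h₂ := hval ⟨n - 1, by omega⟩
  simp only at h₀ h₁ h₂ v₀ v₁ v₂
  omega

theorem has132 (h : IsSpecial hn π) : Has132 π := by
  obtain ⟨v₀, v₁, v₂, -⟩ := h
  refine ⟨⟨0, by omega⟩, ⟨1, by omega⟩, ⟨n - 1, by omega⟩, ?_, ?_, ?_, ?_⟩ <;>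
    simp only [Fin.lt_def] <;> omega

theorem eq_of_isOcc132 (h : IsSpecial hn π) {i j k : Fin n} (hocc : IsOcc132 π i j k) :
    (i : ℕ) = 0 ∧ (j : ℕ) = 1 ∧ (k : ℕ) = n - 1 := by
  obtain ⟨hij, hjk, hik, hkj⟩ := hocc
  have hk : (k : ℕ) = n - 1 := by
    by_contra hk
    simp only [Fin.lt_def] at hij hjk hik
    have hπk := h.val_lt_iff.mpr ⟨by omega, hk⟩
    have hi := h.val_lt_iff.mp (hik.trans hπk)
    exact h.2.2.2 i j k hi.1 (Fin.lt_def.mpr hij) (Fin.lt_def.mpr hjk) (by omega) ⟨hik, hkj⟩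
  have hπk : (π k : ℕ) = n - 2 := by
    rw [show k = ⟨n - 1, by omega⟩ from Fin.ext hk]
    exact h.2.2.1
  have hj : j = ⟨1, by omega⟩ := by
    refine π.injective (Fin.ext ?_)
    rw [h.2.1]
    simp only [Fin.lt_def] at hkj
    omega
  simp only [Fin.lt_def, hj] at hij
  exact ⟨by omega, by simp [hj], hk⟩

theorem avoids (h : IsSpecial hn π) : ∀ p ∈ Pi17, ¬ ContainsPat π p := by
  intro p hp hcont
  obtain ⟨a, b, c, l, hocc, hl⟩ := exists_isOcc132_of_mem_Pi17 p hp
  obtain ⟨idx, hidx, htransfer⟩ := ContainsPat.isOcc132 hcont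
  obtain ⟨ha, hb, hc⟩ := h.eq_of_isOcc132 (htransfer hocc)
  rcases hl with hl | ⟨hl₁, hl₂⟩ | hl
  · have := hidx hl
    simp only [Fin.lt_def] at this
    omega
  · have := hidx hl₁
    have := hidx hl₂
    simp only [Fin.lt_def] at *
    omega
  · have := hidx hl
    simp only [Fin.lt_def] at this
    omega

end IsSpecial

end Structure

section Catalan

variable {m : ℕ}

def leftPos (b : Fin (m + 1)) : Fin b → Fin (m + 1) := shift 0 (by omega)

def rightPos (b : Fin (m + 1)) : Fin (m - b) → Fin (m + 1) := shift (b + 1) (by omega)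

def topVal (b : Fin (m + 1)) : Fin b → Fin (m + 1) := shift (m - b) (by omega)

def bottomVal (b : Fin (m + 1)) : Fin (m - b) → Fin (m + 1) := shift 0 (by omega)

variable {b : Fin (m + 1)}

theorem exists_leftPos_eq {x : Fin (m + 1)} (hx : x < b) : ∃ t, leftPos b t = x :=
  exists_shift_eq_iff.mpr ⟨Nat.zero_le _, hx⟩

theorem exists_rightPos_eq {x : Fin (m + 1)} (hx : b < x) : ∃ t, rightPos b t = x :=
  exists_shift_eq_iff.mpr ⟨hx, by omega⟩

theorem exists_topVal_eq {v : Fin (m + 1)} (hv : m - b ≤ (v : ℕ)) (hv' : v ≠ Fin.last m) :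
    ∃ t, topVal b t = v :=
  exists_shift_eq_iff.mpr ⟨hv, by rw [ne_eq, Fin.ext_iff, Fin.val_last] at hv'; omega⟩

theorem exists_bottomVal_eq {v : Fin (m + 1)} (hv : (v : ℕ) < m - b) :
    ∃ t, bottomVal b t = v :=
  exists_shift_eq_iff.mpr ⟨Nat.zero_le _, hv⟩

theorem has132_iff_of_apply_eq_last {π : Perm (Fin (m + 1))}
    (hb : π b = Fin.last m) :
    Has132 π ↔ (∃ x y, x < b ∧ b < y ∧ π x < π y) ∨ Has132 (π ∘ leftPos b) ∨
      Has132 (π ∘ rightPos b) := by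
  simp only [leftPos, rightPos, has132_comp_shift_iff]
  constructor
  · rintro ⟨i, j, k, hocc⟩
    have ⟨hij, hjk, hik, hkj⟩ := hocc
    rcases lt_trichotomy k b with hkb | rfl | hbk
    · exact .inr (.inl ⟨i, j, k, by omega, Fin.lt_def.mp hkb, hocc⟩)
    · exact absurd hkj (hb ▸ (Fin.le_last _).not_gt)
    rcases lt_trichotomy i b with hib | rfl | hbi
    · exact .inl ⟨i, k, hib, hbk, hik⟩
    · exact absurd hik (hb ▸ (Fin.le_last _).not_gt)
    · exact .inr (.inr ⟨i, j, k, Fin.lt_def.mp hbi, by omega, hocc⟩)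
  · rintro (⟨x, y, hxb, hby, hxy⟩ | ⟨i, j, k, -, -, hocc⟩ | ⟨i, j, k, -, -, hocc⟩)
    · refine ⟨x, b, y, hxb, hby, hxy, ?_⟩
      rw [hb]
      exact (Fin.le_last _).lt_of_ne fun h => hby.ne' (π.injective (h.trans hb.symm))
    · exact ⟨i, j, k, hocc⟩
    · exact ⟨i, j, k, hocc⟩

variable {β : Perm (Fin b)} {γ : Perm (Fin (m - b))}

def glueFun (b : Fin (m + 1)) (β : Perm (Fin b)) (γ : Perm (Fin (m - b))) (x : Fin (m + 1)) :
    Fin (m + 1) :=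
  if h : (x : ℕ) < b then topVal b (β ⟨x, h⟩)
  else if h' : (x : ℕ) = b then Fin.last m
  else bottomVal b (γ ⟨x - b - 1, by omega⟩)

theorem glueFun_leftPos (t : Fin b) : glueFun b β γ (leftPos b t) = topVal b (β t) := by
  simp [glueFun, leftPos]

theorem glueFun_self : glueFun b β γ b = Fin.last m := by
  simp [glueFun]

theorem glueFun_rightPos (t : Fin (m - b)) :
    glueFun b β γ (rightPos b t) = bottomVal b (γ t) := by
  have h₁ : ¬ (rightPos b t : ℕ) < b := by simp [rightPos]; omega
  have h₂ : (rightPos b t : ℕ) ≠ b := by simp [rightPos]; omega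
  rw [glueFun, dif_neg h₁, dif_neg h₂]
  congr 2
  ext
  simp [rightPos]; omega

theorem glueFun_surjective : Surjective (glueFun b β γ) := by
  intro v
  by_cases hv : v = Fin.last m
  · exact ⟨b, hv ▸ glueFun_self⟩
  by_cases hv' : m - b ≤ (v : ℕ)
  · obtain ⟨t, rfl⟩ := exists_topVal_eq hv' hv
    exact ⟨leftPos b (β.symm t), by rw [glueFun_leftPos, apply_symm_apply]⟩
  · obtain ⟨t, rfl⟩ := exists_bottomVal_eq (b := b) (Nat.lt_of_not_le hv')
    exact ⟨rightPos b (γ.symm t), by rw [glueFun_rightPos, apply_symm_apply]⟩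

noncomputable def glue (b : Fin (m + 1)) (β : Perm (Fin b)) (γ : Perm (Fin (m - b))) :
    Perm (Fin (m + 1)) :=
  Equiv.ofBijective _
    (Finite.surjective_iff_bijective.mp (glueFun_surjective (β := β) (γ := γ)))

theorem glue_comp_leftPos : glue b β γ ∘ leftPos b = topVal b ∘ β :=
  funext glueFun_leftPos

theorem glue_apply_self : glue b β γ b = Fin.last m :=
  glueFun_self

theorem glue_comp_rightPos : glue b β γ ∘ rightPos b = bottomVal b ∘ γ :=
  funext glueFun_rightPos

theorem not_has132_glue (hβ : ¬ Has132 β) (hγ : ¬ Has132 γ) : ¬ Has132 (glue b β γ) := by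
  rw [has132_iff_of_apply_eq_last glue_apply_self, glue_comp_leftPos, glue_comp_rightPos,
    has132_comp_iff (g := topVal b) (strictMono_shift _ _),
    has132_comp_iff (g := bottomVal b) (strictMono_shift _ _)]
  rintro (⟨x, y, hxb, hby, hxy⟩ | hβ' | hγ')
  · obtain ⟨s, rfl⟩ := exists_leftPos_eq hxb
    obtain ⟨t, rfl⟩ := exists_rightPos_eq hby
    rw [← comp_apply (f := glue b β γ), glue_comp_leftPos, ← comp_apply (f := glue b β γ),
      glue_comp_rightPos] at hxy
    simp only [comp_apply, topVal, bottomVal, Fin.lt_def, val_shift] at hxy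
    omega
  · exact hβ hβ'
  · exact hγ hγ'

section Avoiding

variable {π : Perm (Fin (m + 1))}

theorem apply_lt_apply_of_not_has132 (hπ : ¬ Has132 π) (hb : π b = Fin.last m)
    {x y : Fin (m + 1)} (hx : x ≤ b) (hy : b < y) : π y < π x := by
  rcases hx.lt_or_eq with hx | rfl
  · by_contra! h
    exact hπ ((has132_iff_of_apply_eq_last hb).mpr
      (.inl ⟨x, y, hx, hy, h.lt_of_ne (π.injective.ne (hx.trans hy).ne)⟩))
  · rw [hb]
    exact (Fin.le_last _).lt_of_ne fun h => hy.ne' (π.injective (h.trans hb.symm))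

theorem val_lt_of_not_has132 (hπ : ¬ Has132 π) (hb : π b = Fin.last m) {y : Fin (m + 1)}
    (hy : b < y) : (π y : ℕ) < m - b := by
  have := card_le_card (show Iic b ⊆ ({l | π y < π l} : Finset _) from fun x hx =>
    mem_filter.mpr ⟨mem_univ _, apply_lt_apply_of_not_has132 hπ hb (mem_Iic.mp hx) hy⟩)
  rw [Fin.card_Iic, card_filter_gt] at this
  omega

theorem le_val_of_not_has132 (hπ : ¬ Has132 π) (hb : π b = Fin.last m) {x : Fin (m + 1)}
    (hx : x < b) : m - b ≤ (π x : ℕ) := by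
  have := card_le_card (show Ioi b ⊆ ({l | π l < π x} : Finset _) from fun y hy =>
    mem_filter.mpr ⟨mem_univ _, apply_lt_apply_of_not_has132 hπ hb hx.le (mem_Ioi.mp hy)⟩)
  rw [Fin.card_Ioi, card_filter_lt] at this
  omega

theorem exists_glue_eq (hπ : ¬ Has132 π) (hb : π b = Fin.last m) :
    ∃ (β : Perm (Fin b)) (γ : Perm (Fin (m - b))),
      ¬ Has132 β ∧ ¬ Has132 γ ∧ glue b β γ = π := by
  have hne : ∀ x, x ≠ b → π x ≠ Fin.last m := fun x hx h =>
    hx (π.injective (h.trans hb.symm))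
  obtain ⟨β, hβ⟩ : ∃ β : Perm (Fin b), topVal b ∘ β = π ∘ leftPos b := by
    refine exists_perm_restrict π _ _ fun t => ⟨le_val_of_not_has132 hπ hb ?_, ?_⟩
    · simp [Fin.lt_def]
    · have := Fin.val_lt_last (hne (leftPos b t) (by simp [leftPos, Fin.ext_iff]; omega))
      simp only [leftPos] at this
      omega
  obtain ⟨γ, hγ⟩ : ∃ γ : Perm (Fin (m - b)), bottomVal b ∘ γ = π ∘ rightPos b :=
    exists_perm_restrict π _ _ fun t =>
      ⟨Nat.zero_le _, val_lt_of_not_has132 hπ hb (by simp [Fin.lt_def]; omega)⟩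
  refine ⟨β, γ, ?_, ?_, ?_⟩
  · rw [← has132_comp_iff (g := topVal b) (strictMono_shift _ _), hβ]
    exact fun h => hπ ((has132_iff_of_apply_eq_last hb).mpr (.inr (.inl h)))
  · rw [← has132_comp_iff (g := bottomVal b) (strictMono_shift _ _), hγ]
    exact fun h => hπ ((has132_iff_of_apply_eq_last hb).mpr (.inr (.inr h)))
  · refine Equiv.ext fun x => ?_
    rcases lt_trichotomy x b with hx | rfl | hx
    · obtain ⟨t, rfl⟩ := exists_leftPos_eq hx
      exact congrFun (glue_comp_leftPos.trans hβ) t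
    · rw [glue_apply_self, hb]
    · obtain ⟨t, rfl⟩ := exists_rightPos_eq hx
      exact congrFun (glue_comp_rightPos.trans hγ) t

end Avoiding

theorem card_not_has132_symm_last (b : Fin (m + 1)) :
    Nat.card {π : {π : Perm (Fin (m + 1)) // ¬ Has132 π} // π.1.symm (Fin.last m) = b} =
      Nat.card {β : Perm (Fin b) // ¬ Has132 β} *
        Nat.card {γ : Perm (Fin (m - b)) // ¬ Has132 γ} := by
  rw [← Nat.card_prod]
  refine (Nat.card_eq_of_bijective (fun p => ⟨⟨glue b p.1 p.2, not_has132_glue p.1.2 p.2.2⟩,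
    (symm_apply_eq _).mpr glue_apply_self.symm⟩) ⟨?_, ?_⟩).symm
  · rintro ⟨⟨β₁, _⟩, ⟨γ₁, _⟩⟩ ⟨⟨β₂, _⟩, ⟨γ₂, _⟩⟩ h
    have h' : glue b β₁ γ₁ = glue b β₂ γ₂ := congrArg (fun π => π.1.1) h
    have hβ : topVal b ∘ β₁ = topVal b ∘ β₂ := by
      rw [← glue_comp_leftPos, h', glue_comp_leftPos]
    have hγ : bottomVal b ∘ γ₁ = bottomVal b ∘ γ₂ := by
      rw [← glue_comp_rightPos, h', glue_comp_rightPos]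
    simp only [Prod.mk.injEq, Subtype.mk.injEq]
    exact ⟨DFunLike.coe_injective ((strictMono_shift _ _).injective.comp_left hβ),
      DFunLike.coe_injective ((strictMono_shift _ _).injective.comp_left hγ)⟩
  · rintro ⟨⟨π, hπ⟩, hb⟩
    obtain ⟨β, γ, hβ, hγ, rfl⟩ :=
      exists_glue_eq (b := b) hπ (by rw [← hb]; exact π.apply_symm_apply _)
    exact ⟨⟨⟨β, hβ⟩, ⟨γ, hγ⟩⟩, rfl⟩

end Catalan

theorem card_not_has132 (m : ℕ) : Nat.card {π : Perm (Fin m) // ¬ Has132 π} = catalan m := by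
  induction m using Nat.strong_induction_on with
  | _ m ih =>
    rcases m with _ | m
    · have : ∀ π : Perm (Fin 0), ¬ Has132 π := fun _ ⟨i, _⟩ => i.elim0
      rw [Nat.card_congr (Equiv.subtypeUnivEquiv this), catalan_zero, Nat.card_eq_fintype_card,
        Fintype.card_perm]
      rfl
    · rw [← Nat.card_congr (Equiv.sigmaFiberEquiv
        fun π : {π : Perm (Fin (m + 1)) // ¬ Has132 π} => π.1.symm (Fin.last m)),
        Nat.card_sigma, catalan_succ]
      refine sum_congr rfl fun b _ => ?_
      rw [card_not_has132_symm_last, ih b (by omega), ih (m - b) (by omega)]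

def lowVal (n : ℕ) : Fin (n - 3) → Fin n := shift 0 (by omega)

theorem exists_lowVal_eq {n : ℕ} {v : Fin n} (hv : (v : ℕ) < n - 3) : ∃ t, lowVal n t = v :=
  exists_shift_eq_iff.mpr ⟨Nat.zero_le _, hv⟩

section Special

variable {n : ℕ} (hn : 4 ≤ n)

def midPos : Fin (n - 3) → Fin n := shift 2 (by omega)

def specialFun (α : Perm (Fin (n - 3))) (x : Fin n) : Fin n :=
  if h₀ : (x : ℕ) = 0 then ⟨n - 3, by omega⟩
  else if h₁ : (x : ℕ) = 1 then ⟨n - 1, by omega⟩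
  else if h₂ : (x : ℕ) = n - 1 then ⟨n - 2, by omega⟩
  else lowVal n (α ⟨x - 2, by omega⟩)

theorem exists_midPos_eq {x : Fin n} (hx : 2 ≤ (x : ℕ)) (hx' : (x : ℕ) ≤ n - 2) :
    ∃ t, midPos hn t = x :=
  exists_shift_eq_iff.mpr ⟨hx, by omega⟩

variable {hn} {α : Perm (Fin (n - 3))}

theorem specialFun_of_val_eq_zero {x : Fin n} (hx : (x : ℕ) = 0) :
    (specialFun hn α x : ℕ) = n - 3 := by
  simp [specialFun, hx]

theorem specialFun_of_val_eq_one {x : Fin n} (hx : (x : ℕ) = 1) :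
    (specialFun hn α x : ℕ) = n - 1 := by
  simp [specialFun, hx]

theorem specialFun_of_val_eq_last {x : Fin n} (hx : (x : ℕ) = n - 1) :
    (specialFun hn α x : ℕ) = n - 2 := by
  rw [specialFun, dif_neg (by omega), dif_neg (by omega), dif_pos hx]

theorem specialFun_midPos (t : Fin (n - 3)) : specialFun hn α (midPos hn t) = lowVal n (α t) := by
  have : (midPos hn t : ℕ) = t + 2 := rfl
  rw [specialFun, dif_neg (by omega), dif_neg (by omega), dif_neg (by omega)]
  congr 2

theorem specialFun_surjective : Surjective (specialFun hn α) := by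
  intro v
  by_cases hv : (v : ℕ) < n - 3
  · obtain ⟨t, rfl⟩ := exists_lowVal_eq hv
    exact ⟨midPos hn (α.symm t), by rw [specialFun_midPos, apply_symm_apply]⟩
  · obtain h | h | h : (v : ℕ) = n - 3 ∨ (v : ℕ) = n - 2 ∨ (v : ℕ) = n - 1 := by omega
    · exact ⟨⟨0, by omega⟩, Fin.ext ((specialFun_of_val_eq_zero rfl).trans h.symm)⟩
    · exact ⟨⟨n - 1, by omega⟩, Fin.ext ((specialFun_of_val_eq_last rfl).trans h.symm)⟩
    · exact ⟨⟨1, by omega⟩, Fin.ext ((specialFun_of_val_eq_one rfl).trans h.symm)⟩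

variable (hn α) in
noncomputable def special : Perm (Fin n) :=
  Equiv.ofBijective _
    (Finite.surjective_iff_bijective.mp (specialFun_surjective (hn := hn) (α := α)))

theorem special_comp_midPos : special hn α ∘ midPos hn = lowVal n ∘ α :=
  funext specialFun_midPos

variable {π : Perm (Fin n)}

theorem forall_not_iff_not_has132_comp_midPos :
    (∀ a b c : Fin n, 2 ≤ (a : ℕ) → a < b → b < c → (c : ℕ) ≤ n - 2 →
      ¬ (π a < π c ∧ π c < π b)) ↔ ¬ Has132 (π ∘ midPos hn) := by
  rw [midPos, has132_comp_shift_iff]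
  constructor
  · rintro h ⟨a, b, c, ha, hc, hab, hbc, habc⟩
    exact h a b c ha hab hbc (by omega) habc
  · intro h a b c ha hab hbc hc habc
    exact h ⟨a, b, c, ha, by omega, hab, hbc, habc⟩

theorem isSpecial_special (hα : ¬ Has132 α) : IsSpecial hn (special hn α) := by
  refine ⟨specialFun_of_val_eq_zero (hn := hn) (α := α) rfl,
    specialFun_of_val_eq_one (hn := hn) (α := α) rfl,
    specialFun_of_val_eq_last (hn := hn) (α := α) rfl, ?_⟩
  rw [forall_not_iff_not_has132_comp_midPos (hn := hn), special_comp_midPos,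
    has132_comp_iff (g := lowVal n) (strictMono_shift _ _)]
  exact hα

theorem IsSpecial.exists_special_eq (h : IsSpecial hn π) :
    ∃ α : Perm (Fin (n - 3)), ¬ Has132 α ∧ special hn α = π := by
  obtain ⟨α, hα⟩ : ∃ α : Perm (Fin (n - 3)), lowVal n ∘ α = π ∘ midPos hn :=
    exists_perm_restrict π _ _ fun t => ⟨Nat.zero_le _, h.val_lt_iff.mpr
      ⟨by simp, by simp; omega⟩⟩
  refine ⟨α, ?_, ?_⟩
  · rw [← has132_comp_iff (g := lowVal n) (strictMono_shift _ _), hα,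
      ← forall_not_iff_not_has132_comp_midPos]
    exact h.2.2.2
  · refine Equiv.ext fun x => ?_
    obtain hx | hx | hx | ⟨hx, hx'⟩ : (x : ℕ) = 0 ∨ (x : ℕ) = 1 ∨ (x : ℕ) = n - 1 ∨
        2 ≤ (x : ℕ) ∧ (x : ℕ) ≤ n - 2 := by omega
    · rw [show x = ⟨0, by omega⟩ from Fin.ext hx]
      exact Fin.ext ((specialFun_of_val_eq_zero (hn := hn) (α := α) rfl).trans h.1.symm)
    · rw [show x = ⟨1, by omega⟩ from Fin.ext hx]
      exact Fin.ext ((specialFun_of_val_eq_one (hn := hn) (α := α) rfl).trans h.2.1.symm)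
    · rw [show x = ⟨n - 1, by omega⟩ from Fin.ext hx]
      exact Fin.ext ((specialFun_of_val_eq_last (hn := hn) (α := α) rfl).trans h.2.2.1.symm)
    · obtain ⟨t, rfl⟩ := exists_midPos_eq hn hx hx'
      exact congrFun (special_comp_midPos.trans hα) t

theorem card_isSpecial : Nat.card {π : Perm (Fin n) // IsSpecial hn π} = catalan (n - 3) := by
  rw [← card_not_has132 (n - 3)]
  refine (Nat.card_eq_of_bijective (fun α => ⟨special hn α.1, isSpecial_special α.2⟩)
    ⟨?_, ?_⟩).symm
  · rintro ⟨α₁, _⟩ ⟨α₂, _⟩ h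
    have h' : lowVal n ∘ α₁ = lowVal n ∘ α₂ := by
      rw [← special_comp_midPos (hn := hn), show special hn α₁ = special hn α₂ from
        congrArg Subtype.val h, special_comp_midPos]
    exact Subtype.ext (DFunLike.coe_injective ((strictMono_shift _ _).injective.comp_left h'))
  · rintro ⟨π, hπ⟩
    obtain ⟨α, hα, rfl⟩ := hπ.exists_special_eq
    exact ⟨⟨α, hα⟩, rfl⟩

end Special

theorem avoids_Pi17_iff {n : ℕ} (hn : 4 ≤ n) {π : Perm (Fin n)} :
    (∀ p ∈ Pi17, ¬ ContainsPat π p) ↔ ¬ Has132 π ∨ IsSpecial hn π :=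
  ⟨fun hav => or_iff_not_imp_left.mpr fun h => isSpecial_of_avoids hn hav (not_not.mp h),
    fun h => h.elim (fun h _ hp hc => h (has132_of_containsPat hp hc)) IsSpecial.avoids⟩

end Av132

open Av132

/-- For `n ≥ 4`: the `Π`-avoiders of `[n]` are exactly the `132`-avoiders together
with the permutations `(n-2) n α (n-1)` with `α` a `132`-avoiding permutation of
`{1,…,n-3}`; consequently `|Av_n(Π)| = Cat n + Cat (n-3)`. -/
theorem stmt17 (n : ℕ) (hn : 4 ≤ n) :
    (∀ π : Equiv.Perm (Fin n),
      (∀ p ∈ Pi17, ¬ ContainsPat π p) ↔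
        (¬ ContainsPat π (![0,2,1] : Fin 3 → Fin 3) ∨
          ((π ⟨0, by omega⟩ : ℕ) = n - 3 ∧ (π ⟨1, by omega⟩ : ℕ) = n - 1 ∧
           (π ⟨n - 1, by omega⟩ : ℕ) = n - 2 ∧
           (∀ a b c : Fin n, 2 ≤ (a : ℕ) → a < b → b < c → (c : ℕ) ≤ n - 2 →
              ¬ (π a < π c ∧ π c < π b))))) ∧
    Nat.card {π : Equiv.Perm (Fin n) // ∀ p ∈ Pi17, ¬ ContainsPat π p} =
      catalan n + catalan (n - 3) := by
  classical
  have hdisj : Disjoint (fun π : Perm (Fin n) => ¬ Has132 π) (IsSpecial hn) :=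
    Pi.disjoint_iff.mpr fun _ => Prop.disjoint_iff.mpr fun h => h.1 h.2.has132
  refine ⟨fun π => by rw [avoids_Pi17_iff hn, containsPat_021_iff]; rfl, ?_⟩
  rw [Nat.card_congr ((Equiv.subtypeEquivRight fun π => avoids_Pi17_iff hn).trans
      (subtypeOrEquiv _ _ hdisj)),
    Nat.card_sum, card_not_has132, card_isSpecial]
end
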